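/- arXiv:2306.05009 — 5 statements merged into one kernel-verified Lean document; each statement's English description precedes it below -/
import Mathlib

section
/- For every s ∈ (0, π), the partial sums of the series ∑_{n=0}^∞ e^{i(2n+1)s}/(2n+1) converge, and the limit equals (1/2)·ln(cot(s/2)) + iπ/4; that is, lim_{N→∞} ∑_{n=0}^{N} e^{i(2n+1)s}/(2n+1) = (1/2)·Real.log(cot(s/2)) + iπ/4 in ℂ. -/
open Filter Finset


lemma boundary_log (w : ℂ) (hw : ‖w‖ = 1) (hw1 : w ≠ 1) :
    Tendsto (fun N : ℕ => ∑ k ∈ Finset.range N, w ^ k / k) atTop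
      (nhds (-Complex.log (1 - w))) := by
  -- Step 1: the partial sums converge to some limit L (Dirichlet's test)
  have hw1' : (1 : ℂ) - w ≠ 0 := sub_ne_zero.mpr hw1.symm
  have hcau : CauchySeq fun n : ℕ => ∑ i ∈ Finset.range n,
      (1 / (i + 1) : ℝ) • w ^ (i + 1) := by
    apply Antitone.cauchySeq_series_mul_of_tendsto_zero_of_bounded
      (b := 2 / ‖1 - w‖)
    · intro a b hab
      apply one_div_le_one_div_of_le (by positivity)
      exact_mod_cast by omega
    · exact tendsto_one_div_add_atTop_nhds_zero_nat
    · intro n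
      have : ∑ i ∈ Finset.range n, w ^ (i + 1) = w * ∑ i ∈ Finset.range n, w ^ i := by
        rw [Finset.mul_sum]; congr 1; ext i; ring
      rw [this, norm_mul, hw, one_mul, geom_sum_eq hw1, norm_div]
      rw [div_le_div_iff₀ (norm_pos_iff.mpr (sub_ne_zero.mpr hw1)) (norm_pos_iff.mpr hw1')]
      rw [norm_sub_rev (w ^ n)]
      calc ‖1 - w ^ n‖ * ‖1 - w‖ ≤ (‖(1:ℂ)‖ + ‖w ^ n‖) * ‖1 - w‖ := by
            gcongr; exact norm_sub_le _ _
        _ = 2 * ‖w - 1‖ := by rw [norm_pow, hw, norm_sub_rev]; norm_num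
  obtain ⟨L, hL⟩ := cauchySeq_tendsto_of_complete hcau
  have hL' : Tendsto (fun n : ℕ => ∑ k ∈ Finset.range n, w ^ k / k) atTop (nhds L) := by
    rw [← tendsto_add_atTop_iff_nat 1]
    convert hL using 2 with n
    rw [Finset.sum_range_succ' (fun k => w ^ k / (k : ℂ)) n]
    simp only [Nat.cast_zero, pow_zero, div_zero, add_zero]
    congr 1 with i
    push_cast
    rw [Complex.real_smul]
    push_cast
    ring
  -- Step 2: identify the limit via Abel's theorem
  have habel := Complex.tendsto_tsum_powerSeries_nhdsWithin_lt (f := fun n => w ^ n / n) hL'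
  rw [Filter.tendsto_map'_iff] at habel
  have hev : (fun x : ℝ => (fun z : ℂ => ∑' n : ℕ, (w ^ n / n) * z ^ n) (Complex.ofReal x))
      =ᶠ[nhdsWithin 1 (Set.Iio 1)] fun x : ℝ => -Complex.log (1 - x * w) := by
    filter_upwards [Ioo_mem_nhdsLT_of_mem (by norm_num : (1:ℝ) ∈ Set.Ioc (-1) 1)] with x hx
    have hxw : ‖(x : ℂ) * w‖ < 1 := by
      rw [norm_mul, hw, mul_one, Complex.norm_real, Real.norm_eq_abs, abs_lt]
      exact ⟨hx.1, hx.2⟩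
    have := (Complex.hasSum_taylorSeries_neg_log hxw).tsum_eq
    rw [← this]
    congr 1 with n
    rw [mul_pow]; ring
  have hlog : Tendsto (fun x : ℝ => -Complex.log (1 - x * w)) (nhdsWithin 1 (Set.Iio 1))
      (nhds (-Complex.log (1 - w))) := by
    have hslit : (1 : ℂ) - w ∈ Complex.slitPlane := by
      rw [Complex.mem_slitPlane_iff]
      rcases eq_or_ne w.im 0 with him | him
      · left
        have : w.re ≠ 1 := by
          intro hre
          apply hw1
          apply Complex.ext hre him
        have habs : w.re * w.re + w.im * w.im = 1 := by
          have h2 : Complex.normSq w = 1 := by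
            rw [← Complex.sq_norm, hw]; norm_num
          rwa [Complex.normSq_apply] at h2
        have hre : w.re = -1 := by
          rcases mul_eq_zero.mp (show (w.re - 1) * (w.re + 1) = 0 by nlinarith) with h | h
          · exact absurd (by linarith) this
          · linarith
        simp only [Complex.sub_re, Complex.one_re, hre]
        norm_num
      · right; simpa using him
    have hc : Tendsto (fun x : ℝ => 1 - (x : ℂ) * w) (nhdsWithin 1 (Set.Iio 1))
        (nhds (1 - w)) := by
      apply Tendsto.mono_left _ nhdsWithin_le_nhds
      have hcont : Continuous fun x : ℝ => 1 - (x : ℂ) * w := by continuity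
      simpa using hcont.tendsto 1
    exact ((continuousAt_clog hslit).tendsto.comp hc).neg
  have := habel.congr' hev
  exact tendsto_nhds_unique this hlog ▸ hL'


lemma aux_polar (a t : ℝ) (ha : 0 < a) (ht1 : -Real.pi < t) (ht2 : t ≤ Real.pi) :
    Complex.log ((a : ℂ) * Complex.exp (Complex.I * t)) =
      (Real.log a : ℂ) + Complex.I * t := by
  have : (a : ℂ) * Complex.exp (Complex.I * t)
      = Complex.exp ((Real.log a : ℂ) + Complex.I * t) := by
    rw [Complex.exp_add, ← Complex.ofReal_exp, Real.exp_log ha]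
  rw [this, Complex.log_exp] <;> simp [ht1, ht2]

lemma aux_plus (s : ℝ) : 1 + Complex.exp (Complex.I * s)
    = (↑(2 * Real.cos (s / 2)) : ℂ) * Complex.exp (Complex.I * ↑(s / 2)) := by
  rw [mul_comm Complex.I (s : ℂ), mul_comm Complex.I ((s / 2 : ℝ) : ℂ),
    Complex.exp_mul_I, Complex.exp_mul_I]
  rw [show Complex.cos ((s : ℂ)) = ((Real.cos s : ℝ) : ℂ) by rw [Complex.ofReal_cos],
    show Complex.sin ((s : ℂ)) = ((Real.sin s : ℝ) : ℂ) by rw [Complex.ofReal_sin],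
    show Complex.cos (((s / 2 : ℝ) : ℂ)) = ((Real.cos (s / 2) : ℝ) : ℂ) by
      rw [Complex.ofReal_cos],
    show Complex.sin (((s / 2 : ℝ) : ℂ)) = ((Real.sin (s / 2) : ℝ) : ℂ) by
      rw [Complex.ofReal_sin]]
  have hc : Real.cos s = 2 * Real.cos (s / 2) ^ 2 - 1 := by
    rw [show s = 2 * (s / 2) by ring, Real.cos_two_mul]
    ring_nf
  have hs : Real.sin s = 2 * Real.sin (s / 2) * Real.cos (s / 2) := by
    rw [show s = 2 * (s / 2) by ring, Real.sin_two_mul]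
    ring_nf
  rw [hc, hs]; push_cast; ring

lemma aux_minus (s : ℝ) : 1 - Complex.exp (Complex.I * s)
    = (↑(2 * Real.sin (s / 2)) : ℂ) * Complex.exp (Complex.I * ↑(s / 2 - Real.pi / 2)) := by
  rw [mul_comm Complex.I (s : ℂ), mul_comm Complex.I ((s / 2 - Real.pi / 2 : ℝ) : ℂ),
    Complex.exp_mul_I, Complex.exp_mul_I]
  rw [show Complex.cos ((s : ℂ)) = ((Real.cos s : ℝ) : ℂ) by rw [Complex.ofReal_cos],
    show Complex.sin ((s : ℂ)) = ((Real.sin s : ℝ) : ℂ) by rw [Complex.ofReal_sin],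
    show Complex.cos (((s / 2 - Real.pi / 2 : ℝ) : ℂ))
        = ((Real.cos (s / 2 - Real.pi / 2) : ℝ) : ℂ) by rw [Complex.ofReal_cos],
    show Complex.sin (((s / 2 - Real.pi / 2 : ℝ) : ℂ))
        = ((Real.sin (s / 2 - Real.pi / 2) : ℝ) : ℂ) by rw [Complex.ofReal_sin]]
  rw [Real.cos_sub_pi_div_two, Real.sin_sub_pi_div_two]
  have hc : Real.cos s = 1 - 2 * Real.sin (s / 2) ^ 2 := by
    have h1 := Real.sin_sq_add_cos_sq (s / 2)
    rw [show s = 2 * (s / 2) by ring, Real.cos_two_mul]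
    ring_nf
    ring_nf at h1
    linarith
  have hs : Real.sin s = 2 * Real.sin (s / 2) * Real.cos (s / 2) := by
    rw [show s = 2 * (s / 2) by ring, Real.sin_two_mul]
    ring_nf
  rw [hc, hs]; push_cast; ring


lemma sum_odd_split (w : ℂ) (N : ℕ) :
    ∑ n ∈ Finset.range (N + 1), w ^ (2 * n + 1) / ((2 * n + 1 : ℕ) : ℂ)
      = (∑ k ∈ Finset.range (2 * N + 3), w ^ k / (k : ℂ)
          - ∑ k ∈ Finset.range (2 * N + 3), (-w) ^ k / (k : ℂ)) / 2 := by
  induction N with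
  | zero =>
    norm_num [Finset.sum_range_succ]
  | succ N ih =>
    rw [Finset.sum_range_succ, ih,
      show 2 * (N + 1) + 3 = (2 * N + 3) + 1 + 1 by ring,
      Finset.sum_range_succ (fun k => w ^ k / (k : ℂ)) (2 * N + 3 + 1),
      Finset.sum_range_succ (fun k => w ^ k / (k : ℂ)) (2 * N + 3),
      Finset.sum_range_succ (fun k => (-w) ^ k / (k : ℂ)) (2 * N + 3 + 1),
      Finset.sum_range_succ (fun k => (-w) ^ k / (k : ℂ)) (2 * N + 3)]
    have ho : (-w) ^ (2 * N + 3) = -(w ^ (2 * N + 3)) := Odd.neg_pow ⟨N + 1, by ring⟩ w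
    have he : (-w) ^ (2 * N + 3 + 1) = w ^ (2 * N + 3 + 1) := Even.neg_pow ⟨N + 2, by ring⟩ w
    rw [ho, he, show 2 * (N + 1) + 1 = 2 * N + 3 by ring]
    push_cast
    ring

/-- For every `s ∈ (0, π)`, the partial sums of `∑_{n≥0} e^{i(2n+1)s}/(2n+1)` converge to
`(1/2)·ln(cot(s/2)) + iπ/4`. -/
theorem partial_sums_atanh_exp (s : ℝ) (hs : s ∈ Set.Ioo 0 Real.pi) :
    Tendsto (fun N : ℕ => ∑ n ∈ Finset.range (N + 1),
        Complex.exp (Complex.I * (2 * (n : ℂ) + 1) * (s : ℂ)) / (2 * (n : ℂ) + 1))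
      atTop
      (nhds ((1 / 2 : ℂ) * (Real.log (Real.cot (s / 2)) : ℂ)
        + Complex.I * (Real.pi : ℂ) / 4)) := by
  obtain ⟨hs0, hsπ⟩ := hs
  have hπ := Real.pi_pos
  set w : ℂ := Complex.exp (Complex.I * s) with hw_def
  have hsin : 0 < Real.sin s := Real.sin_pos_of_pos_of_lt_pi hs0 hsπ
  have hwim : w.im = Real.sin s := by
    rw [hw_def, mul_comm]; exact Complex.exp_ofReal_mul_I_im s
  have hw : ‖w‖ = 1 := by
    rw [hw_def, mul_comm]
    exact Complex.norm_exp_ofReal_mul_I s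
  have hw1 : w ≠ 1 := by
    intro h
    rw [h] at hwim
    simp only [Complex.one_im] at hwim
    linarith
  have hwm1 : -w ≠ 1 := by
    intro h
    have : w.im = 0 := by
      have := congrArg Complex.im h
      simp only [Complex.neg_im, Complex.one_im, neg_eq_zero] at this
      exact this
    rw [hwim] at this; linarith
  have hT := boundary_log w hw hw1
  have hU := boundary_log (-w) (by rwa [norm_neg]) hwm1
  rw [sub_neg_eq_add] at hU
  have h23 : Tendsto (fun N : ℕ => 2 * N + 3) atTop atTop :=
    tendsto_atTop_mono (fun n => by simp only [id_eq]; omega) tendsto_id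
  have hcomb := ((hT.comp h23).sub (hU.comp h23)).div_const 2
  -- trig positivity
  have hcpos : 0 < Real.cos (s / 2) :=
    Real.cos_pos_of_mem_Ioo ⟨by linarith, by linarith⟩
  have hspos : 0 < Real.sin (s / 2) :=
    Real.sin_pos_of_pos_of_lt_pi (by linarith) (by linarith)
  -- the two logs
  have hlogp : Complex.log (1 + w) = (Real.log (2 * Real.cos (s / 2)) : ℂ)
      + Complex.I * ((s / 2 : ℝ) : ℂ) := by
    rw [hw_def, aux_plus s, aux_polar _ _ (by positivity) (by linarith) (by linarith)]
  have hlogm : Complex.log (1 - w) = (Real.log (2 * Real.sin (s / 2)) : ℂ)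
      + Complex.I * ((s / 2 - Real.pi / 2 : ℝ) : ℂ) := by
    rw [hw_def, aux_minus s, aux_polar _ _ (by positivity) (by linarith) (by linarith)]
  have hval : (-Complex.log (1 - w) - -Complex.log (1 + w)) / 2
      = (1 / 2 : ℂ) * (Real.log (Real.cot (s / 2)) : ℂ)
        + Complex.I * (Real.pi : ℂ) / 4 := by
    have hAB : Real.log (Real.cot (s / 2))
        = Real.log (2 * Real.cos (s / 2)) - Real.log (2 * Real.sin (s / 2)) := by
      rw [← Real.log_div (by positivity) (by positivity), Real.cot_eq_cos_div_sin]
      congr 1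
      field_simp
    rw [hlogp, hlogm, hAB]
    push_cast
    ring
  rw [← hval]
  apply hcomb.congr
  intro N
  simp only [Function.comp_apply]
  rw [← sum_odd_split w N]
  apply Finset.sum_congr rfl
  intro n _
  have h1 : Complex.I * (2 * (n : ℂ) + 1) * s = ((2 * n + 1 : ℕ) : ℂ) * (Complex.I * s) := by
    push_cast; ring
  rw [h1, Complex.exp_nat_mul, ← hw_def]
  congr 1
  push_cast
  ring
end

section
/- For every s ∈ (0, π), the series ∑_{n=0}^∞ e^{i(2n+1)s}/((2n−1)(2n+1)(2n+3)) is absolutely convergent and its sum equals −( (1/4)·cos(s) + (iπ/8)·sin²(s) + (1/4)·sin²(s)·ln(cot(s/2)) ). -/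
open Complex Filter Topology


private lemma odd_log_series {ζ : ℂ} (hζ : ‖ζ‖ < 1) :
    HasSum (fun n : ℕ => ζ ^ (2 * n + 1) / (2 * (n : ℂ) + 1))
      ((Complex.log (1 + ζ) - Complex.log (1 - ζ)) / 2) := by
  have h1 := Complex.hasSum_taylorSeries_log hζ
  have h2 := Complex.hasSum_taylorSeries_neg_log hζ
  have h3 := (h1.add h2).mul_left (1 / 2 : ℂ)
  set g : ℕ → ℂ := fun k => (1 / 2 : ℂ) * ((-1) ^ (k + 1) * ζ ^ k / k + ζ ^ k / k) with hg
  have hinj : Function.Injective (fun n : ℕ => 2 * n + 1) := fun a b h => by simpa using h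
  have hvan : ∀ k ∉ Set.range (fun n : ℕ => 2 * n + 1), g k = 0 := by
    intro k hk
    obtain ⟨m, rfl⟩ : ∃ m, k = 2 * m := by
      rcases Nat.even_or_odd k with ⟨m, hm⟩ | ⟨m, hm⟩
      · exact ⟨m, by omega⟩
      · exact absurd ⟨m, by simp; omega⟩ hk
    have : ((-1 : ℂ)) ^ (2 * m + 1) = -1 := Odd.neg_one_pow ⟨m, by ring⟩
    simp only [hg, this]
    ring
  have hG : HasSum g ((Complex.log (1 + ζ) - Complex.log (1 - ζ)) / 2) := by
    convert h3 using 1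
    rfl
    ring
  have := (hinj.hasSum_iff hvan).mpr hG
  convert this using 2 with n
  have hpow : ((-1 : ℂ)) ^ (2 * n + 1 + 1) = 1 := Even.neg_one_pow ⟨n + 1, by ring⟩
  simp only [Function.comp, hg, hpow]
  push_cast
  ring

private lemma d1_ne (n : ℕ) : (2 * (n : ℂ) - 1) ≠ 0 := by
  have h : (2 * (n : ℂ) - 1) = ((2 * (n : ℤ) - 1 : ℤ) : ℂ) := by push_cast; ring
  rw [h]
  exact_mod_cast (by omega : (2 * (n : ℤ) - 1) ≠ 0)

private lemma d2_ne (n : ℕ) : (2 * (n : ℂ) + 1) ≠ 0 := by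
  have h : (2 * (n : ℂ) + 1) = ((2 * (n : ℤ) + 1 : ℤ) : ℂ) := by push_cast; ring
  rw [h]
  exact_mod_cast (by omega : (2 * (n : ℤ) + 1) ≠ 0)

private lemma d3_ne (n : ℕ) : (2 * (n : ℂ) + 3) ≠ 0 := by
  have h : (2 * (n : ℂ) + 3) = ((2 * (n : ℤ) + 3 : ℤ) : ℂ) := by push_cast; ring
  rw [h]
  exact_mod_cast (by omega : (2 * (n : ℤ) + 3) ≠ 0)

private lemma closed_form' {ζ : ℂ} (h0 : ζ ≠ 0) (hζ : ‖ζ‖ < 1) :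
    HasSum (fun n : ℕ => ζ ^ (2 * n + 1) / ((2 * (n : ℂ) - 1) * (2 * (n : ℂ) + 1) * (2 * (n : ℂ) + 3)))
      ((1 / 8) * ((ζ ^ 2 - 2 + ζ⁻¹ ^ 2) * ((Complex.log (1 + ζ) - Complex.log (1 - ζ)) / 2)
        - (ζ + ζ⁻¹))) := by
  set T := (Complex.log (1 + ζ) - Complex.log (1 - ζ)) / 2 with hT
  set f : ℕ → ℂ := fun n => ζ ^ (2 * n + 1) / (2 * (n : ℂ) + 1) with hf
  have hTsum : HasSum f T := odd_log_series hζ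
  -- series with denominator 2n - 1
  have hzz : ζ⁻¹ ^ 2 * ζ ^ 2 = 1 := by
    rw [← mul_pow, inv_mul_cancel₀ h0, one_pow]
  have hz : ζ⁻¹ ^ 2 * ζ = ζ⁻¹ := by
    rw [sq, mul_assoc, inv_mul_cancel₀ h0, mul_one]
  have h1 : HasSum (fun n : ℕ => ζ ^ (2 * n + 1) / (2 * (n : ℂ) - 1)) (ζ ^ 2 * T + (-ζ)) := by
    have hshift : HasSum (fun n : ℕ => ζ ^ (2 * (n + 1) + 1) / (2 * ((n + 1 : ℕ) : ℂ) - 1))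
        (ζ ^ 2 * T) := by
      convert hTsum.mul_left (ζ ^ 2) using 2 with n
      rfl
      rw [hf]
      push_cast
      rw [show 2 * (n + 1) + 1 = (2 * n + 1) + 2 by ring, pow_add]
      ring
    have h := (hasSum_nat_add_iff (f := fun n : ℕ => ζ ^ (2 * n + 1) / (2 * (n : ℂ) - 1)) 1).mp hshift
    convert h using 1
    rfl
    simp
    ring
  -- series with denominator 2n + 3
  have h3 : HasSum (fun n : ℕ => ζ ^ (2 * n + 1) / (2 * (n : ℂ) + 3)) (ζ⁻¹ ^ 2 * (T - ζ)) := by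
    have hshift : HasSum (fun n : ℕ => f (n + 1)) (T - ζ) := by
      refine (hasSum_nat_add_iff (f := f) 1).mpr ?_
      have h : T - ζ + ∑ i ∈ Finset.range 1, f i = T := by simp [hf]
      rw [h]
      exact hTsum
    convert hshift.mul_left (ζ⁻¹ ^ 2) using 2 with n
    rfl
    rw [hf]
    push_cast
    rw [show 2 * (n + 1) + 1 = (2 * n + 1) + 2 by ring,
      show (2 : ℂ) * (↑n + 1) + 1 = 2 * ↑n + 3 by ring]
    field_simp [d3_ne n]
    ring
  have hc := ((h1.add (hTsum.mul_left (-2))).add h3).mul_left (1 / 8 : ℂ)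
  have hval : (1 / 8 : ℂ) * ((ζ ^ 2 * T + (-ζ)) + (-2) * T + ζ⁻¹ ^ 2 * (T - ζ))
      = (1 / 8) * ((ζ ^ 2 - 2 + ζ⁻¹ ^ 2) * T - (ζ + ζ⁻¹)) := by
    linear_combination (-1 / 8 : ℂ) * hz
  have hfun : ∀ n : ℕ, (1 / 8 : ℂ) * (ζ ^ (2 * n + 1) / (2 * (n : ℂ) - 1) + (-2) * f n
        + ζ ^ (2 * n + 1) / (2 * (n : ℂ) + 3))
      = ζ ^ (2 * n + 1) / ((2 * (n : ℂ) - 1) * (2 * (n : ℂ) + 1) * (2 * (n : ℂ) + 3)) := by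
    intro n
    rw [hf]
    field_simp [d1_ne n, d2_ne n, d3_ne n]
    ring
  have hfe : (fun n : ℕ => ζ ^ (2 * n + 1)
        / ((2 * (n : ℂ) - 1) * (2 * (n : ℂ) + 1) * (2 * (n : ℂ) + 3)))
      = fun n : ℕ => (1 / 8 : ℂ) * (ζ ^ (2 * n + 1) / (2 * (n : ℂ) - 1) + (-2) * f n
        + ζ ^ (2 * n + 1) / (2 * (n : ℂ) + 3)) := funext fun n => (hfun n).symm
  rw [hfe, ← hval]
  exact hc

private lemma den_norm_ge (n : ℕ) :
    ((n : ℝ) + 1) ^ 2 ≤ ‖(2 * (n : ℂ) - 1) * (2 * (n : ℂ) + 1) * (2 * (n : ℂ) + 3)‖ := by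
  have e1 : (2 * (n : ℂ) - 1) = ((2 * (n : ℝ) - 1 : ℝ) : ℂ) := by push_cast; ring
  have e2 : (2 * (n : ℂ) + 1) = ((2 * (n : ℝ) + 1 : ℝ) : ℂ) := by push_cast; ring
  have e3 : (2 * (n : ℂ) + 3) = ((2 * (n : ℝ) + 3 : ℝ) : ℂ) := by push_cast; ring
  rw [norm_mul, norm_mul, e1, e2, e3, Complex.norm_real, Complex.norm_real, Complex.norm_real,
    Real.norm_eq_abs, Real.norm_eq_abs, Real.norm_eq_abs]
  rcases n with _ | m
  · norm_num
  · have hx : (1 : ℝ) ≤ ((m : ℝ) + 1) := by have := Nat.cast_nonneg (α := ℝ) m; linarith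
    have h1 : (0 : ℝ) < 2 * ((m : ℝ) + 1) - 1 := by linarith
    have h2 : (0 : ℝ) < 2 * ((m : ℝ) + 1) + 1 := by linarith
    have h3 : (0 : ℝ) < 2 * ((m : ℝ) + 1) + 3 := by linarith
    push_cast
    rw [abs_of_pos h1, abs_of_pos h2, abs_of_pos h3]
    nlinarith [sq_nonneg ((m : ℝ))]

private lemma bound_summable : Summable (fun n : ℕ => 1 / ((n : ℝ) + 1) ^ 2) := by
  have h : Summable (fun n : ℕ => 1 / ((n : ℝ)) ^ 2) :=
    Real.summable_one_div_nat_pow.mpr one_lt_two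
  have := (summable_nat_add_iff 1).mpr h
  simpa using this

private lemma norm_term_le {ξ : ℂ} (hξ : ‖ξ‖ ≤ 1) (n : ℕ) :
    ‖ξ ^ (2 * n + 1) / ((2 * (n : ℂ) - 1) * (2 * (n : ℂ) + 1) * (2 * (n : ℂ) + 3))‖
      ≤ 1 / ((n : ℝ) + 1) ^ 2 := by
  rw [norm_div]
  exact div_le_div₀ zero_le_one (by rw [norm_pow]; exact pow_le_one₀ (norm_nonneg _) hξ)
    (by positivity) (den_norm_ge n)



/-- For every `s ∈ (0, π)`, the series `∑_{n≥0} e^{i(2n+1)s}/((2n−1)(2n+1)(2n+3))` converges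
absolutely and its sum equals `−((1/4)cos s + (iπ/8)sin² s + (1/4)sin² s·ln(cot(s/2)))`. -/
theorem tsum_exp_odd_cubic_denominator (s : ℝ) (hs : s ∈ Set.Ioo 0 Real.pi) :
    Summable (fun n : ℕ => ‖Complex.exp (Complex.I * (2 * (n : ℂ) + 1) * (s : ℂ))
        / ((2 * (n : ℂ) - 1) * (2 * (n : ℂ) + 1) * (2 * (n : ℂ) + 3))‖)
    ∧ (∑' n : ℕ, Complex.exp (Complex.I * (2 * (n : ℂ) + 1) * (s : ℂ))
        / ((2 * (n : ℂ) - 1) * (2 * (n : ℂ) + 1) * (2 * (n : ℂ) + 3)))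
      = -((1 / 4 : ℂ) * (Real.cos s : ℂ)
          + Complex.I * (Real.pi : ℂ) / 8 * (Real.sin s : ℂ) ^ 2
          + (1 / 4 : ℂ) * (Real.sin s : ℂ) ^ 2 * (Real.log (Real.cot (s / 2)) : ℂ)) := by
  obtain ⟨hs0, hsπ⟩ := hs
  have hpi := Real.pi_pos
  set w : ℂ := Complex.exp ((s : ℂ) * Complex.I) with hw
  have hsin : 0 < Real.sin s := Real.sin_pos_of_pos_of_lt_pi hs0 hsπ
  have hs2lo : 0 < s / 2 := by linarith
  have hs2hi : s / 2 < Real.pi / 2 := by linarith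
  have hcos2 : 0 < Real.cos (s / 2) :=
    Real.cos_pos_of_mem_Ioo ⟨by linarith, hs2hi⟩
  have hsin2 : 0 < Real.sin (s / 2) := Real.sin_pos_of_pos_of_lt_pi hs2lo (by linarith)
  have hnw : ‖w‖ = 1 := by
    rw [hw, Complex.norm_exp]
    simp
  have hw0 : w ≠ 0 := Complex.exp_ne_zero _
  have hwc : w = (Real.cos s : ℂ) + (Real.sin s : ℂ) * Complex.I := by
    rw [hw, Complex.exp_mul_I, Complex.ofReal_cos, Complex.ofReal_sin]
  have hterm : ∀ n : ℕ, Complex.exp (Complex.I * (2 * (n : ℂ) + 1) * (s : ℂ))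
      = w ^ (2 * n + 1) := by
    intro n
    rw [hw, ← Complex.exp_nat_mul]
    congr 1
    push_cast
    ring
  have hsum1 : Summable (fun n : ℕ => ‖Complex.exp (Complex.I * (2 * (n : ℂ) + 1) * (s : ℂ))
      / ((2 * (n : ℂ) - 1) * (2 * (n : ℂ) + 1) * (2 * (n : ℂ) + 3))‖) := by
    simp only [hterm]
    exact Summable.of_nonneg_of_le (fun n => norm_nonneg _)
      (fun n => norm_term_le hnw.le n) bound_summable
  refine ⟨hsum1, ?_⟩
  simp only [hterm]
  -- the limit argument
  have hIoo : Set.Ioo (0 : ℝ) 1 ∈ 𝓝[<] (1 : ℝ) :=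
    Ioo_mem_nhdsLT_of_mem (by constructor <;> norm_num)
  set V : ℂ → ℂ := fun ζ => (1 / 8) * ((ζ ^ 2 - 2 + ζ⁻¹ ^ 2)
    * ((Complex.log (1 + ζ) - Complex.log (1 - ζ)) / 2) - (ζ + ζ⁻¹)) with hV
  have hlim1 : Tendsto (fun r : ℝ => ∑' n : ℕ, ((r : ℂ) * w) ^ (2 * n + 1)
      / ((2 * (n : ℂ) - 1) * (2 * (n : ℂ) + 1) * (2 * (n : ℂ) + 3))) (𝓝[<] (1 : ℝ))
      (𝓝 (∑' n : ℕ, w ^ (2 * n + 1)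
      / ((2 * (n : ℂ) - 1) * (2 * (n : ℂ) + 1) * (2 * (n : ℂ) + 3)))) := by
    refine tendsto_tsum_of_dominated_convergence bound_summable (fun k => ?_) ?_
    · have hc : Continuous (fun r : ℝ => ((r : ℂ) * w) ^ (2 * k + 1)
          / ((2 * (k : ℂ) - 1) * (2 * (k : ℂ) + 1) * (2 * (k : ℂ) + 3))) := by
        apply Continuous.div_const
        exact (Complex.continuous_ofReal.mul continuous_const).pow _
      have := (hc.tendsto 1).mono_left (nhdsWithin_le_nhds : 𝓝[<] (1:ℝ) ≤ 𝓝 1)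
      simpa using this
    · filter_upwards [hIoo] with r hr k
      refine norm_term_le ?_ k
      rw [norm_mul, hnw, mul_one, Complex.norm_real, Real.norm_eq_abs,
        abs_of_pos hr.1]
      exact hr.2.le
  have hs1w : (1 + w) ∈ Complex.slitPlane := by
    refine Complex.mem_slitPlane_iff.mpr (Or.inr ?_)
    rw [hwc]
    simp
    exact hsin.ne'
  have hs2w : (1 - w) ∈ Complex.slitPlane := by
    refine Complex.mem_slitPlane_iff.mpr (Or.inr ?_)
    rw [hwc]
    simp
    exact hsin.ne'
  have hVc : ContinuousAt V w := by
    rw [hV]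
    have hinv : ContinuousAt (fun ζ : ℂ => ζ⁻¹) w := continuousAt_inv₀ hw0
    have hL1 : ContinuousAt (fun ζ : ℂ => Complex.log (1 + ζ)) w :=
      (continuousAt_clog hs1w).comp (by fun_prop)
    have hL2 : ContinuousAt (fun ζ : ℂ => Complex.log (1 - ζ)) w :=
      (continuousAt_clog hs2w).comp (by fun_prop)
    exact continuousAt_const.mul
      ((((continuousAt_id.pow 2).sub continuousAt_const).add (hinv.pow 2)).mul
        ((hL1.sub hL2).div_const 2)
        |>.sub (continuousAt_id.add hinv))
  have hrw : Tendsto (fun r : ℝ => (r : ℂ) * w) (𝓝[<] (1 : ℝ)) (𝓝 w) := by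
    have hc : Continuous fun r : ℝ => (r : ℂ) * w := Complex.continuous_ofReal.mul continuous_const
    have := (hc.tendsto 1).mono_left (nhdsWithin_le_nhds : 𝓝[<] (1:ℝ) ≤ 𝓝 1)
    simpa using this
  have hlim2 : Tendsto (fun r : ℝ => ∑' n : ℕ, ((r : ℂ) * w) ^ (2 * n + 1)
      / ((2 * (n : ℂ) - 1) * (2 * (n : ℂ) + 1) * (2 * (n : ℂ) + 3))) (𝓝[<] (1 : ℝ))
      (𝓝 (V w)) := by
    refine (hVc.tendsto.comp hrw).congr' ?_
    filter_upwards [hIoo] with r hr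
    have hne : (r : ℂ) * w ≠ 0 := by
      apply mul_ne_zero _ hw0
      exact_mod_cast hr.1.ne'
    have hlt : ‖(r : ℂ) * w‖ < 1 := by
      rw [norm_mul, hnw, mul_one, Complex.norm_real, Real.norm_eq_abs, abs_of_pos hr.1]
      exact hr.2
    exact ((closed_form' hne hlt).tsum_eq).symm
  have htsum : (∑' n : ℕ, w ^ (2 * n + 1)
      / ((2 * (n : ℂ) - 1) * (2 * (n : ℂ) + 1) * (2 * (n : ℂ) + 3))) = V w :=
    tendsto_nhds_unique hlim1 hlim2
  rw [htsum]
  -- double angle identities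
  have h2 : 2 * (s / 2) = s := by ring
  have hcosd := Real.cos_two_mul (s / 2)
  rw [h2] at hcosd
  have hsind := Real.sin_two_mul (s / 2)
  rw [h2] at hsind
  have hcosdC : (Real.cos s : ℂ) = 2 * (Real.cos (s / 2) : ℂ) ^ 2 - 1 := by
    rw [hcosd]; push_cast; ring
  have hsindC : (Real.sin s : ℂ) = 2 * (Real.sin (s / 2) : ℂ) * (Real.cos (s / 2) : ℂ) := by
    rw [hsind]; push_cast; ring
  have hpy2 : (Real.sin (s / 2) : ℂ) ^ 2 + (Real.cos (s / 2) : ℂ) ^ 2 = 1 := by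
    norm_cast
    exact Real.sin_sq_add_cos_sq (s / 2)
  -- log (1 + w)
  have hexp1 : (1 : ℂ) + w = Complex.exp ((Real.log (2 * Real.cos (s / 2)) : ℂ)
      + ((s / 2 : ℝ) : ℂ) * Complex.I) := by
    rw [Complex.exp_add, ← Complex.ofReal_exp, Real.exp_log (by positivity),
      Complex.exp_mul_I, ← Complex.ofReal_cos, ← Complex.ofReal_sin, hwc]
    simp only [Complex.ofReal_mul, Complex.ofReal_ofNat]
    linear_combination hcosdC + Complex.I * hsindC
  have hlog1 : Complex.log (1 + w) = (Real.log (2 * Real.cos (s / 2)) : ℂ)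
      + ((s / 2 : ℝ) : ℂ) * Complex.I := by
    rw [hexp1, Complex.log_exp] <;> simp <;> linarith
  -- log (1 - w)
  have he1 : Real.cos (s / 2 - Real.pi / 2) = Real.sin (s / 2) := by
    rw [show s / 2 - Real.pi / 2 = -(Real.pi / 2 - s / 2) by ring, Real.cos_neg,
      Real.cos_pi_div_two_sub]
  have he2 : Real.sin (s / 2 - Real.pi / 2) = -Real.cos (s / 2) := by
    rw [show s / 2 - Real.pi / 2 = -(Real.pi / 2 - s / 2) by ring, Real.sin_neg,
      Real.sin_pi_div_two_sub]
  have hexp2 : (1 : ℂ) - w = Complex.exp ((Real.log (2 * Real.sin (s / 2)) : ℂ)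
      + ((s / 2 - Real.pi / 2 : ℝ) : ℂ) * Complex.I) := by
    rw [Complex.exp_add, ← Complex.ofReal_exp, Real.exp_log (by positivity),
      Complex.exp_mul_I, ← Complex.ofReal_cos, ← Complex.ofReal_sin, he1, he2, hwc]
    simp only [Complex.ofReal_mul, Complex.ofReal_ofNat, Complex.ofReal_neg]
    linear_combination (-1) * hcosdC + (-Complex.I) * hsindC + (-2) * hpy2
  have hlog2 : Complex.log (1 - w) = (Real.log (2 * Real.sin (s / 2)) : ℂ)
      + ((s / 2 - Real.pi / 2 : ℝ) : ℂ) * Complex.I := by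
    rw [hexp2, Complex.log_exp] <;> simp <;> linarith
  -- log difference
  have hlogdiff : Real.log (2 * Real.cos (s / 2)) - Real.log (2 * Real.sin (s / 2))
      = Real.log (Real.cot (s / 2)) := by
    rw [← Real.log_div (by positivity) (by positivity), Real.cot_eq_cos_div_sin]
    congr 1
    rw [mul_div_mul_left _ _ (two_ne_zero)]
  have hlogdiffC : (Real.log (2 * Real.cos (s / 2)) : ℂ) - (Real.log (2 * Real.sin (s / 2)) : ℂ)
      = (Real.log (Real.cot (s / 2)) : ℂ) := by
    rw [← hlogdiff]; push_cast; ring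
  -- w inverse
  have hwinv : w⁻¹ = (Real.cos s : ℂ) - (Real.sin s : ℂ) * Complex.I := by
    apply inv_eq_of_mul_eq_one_right
    rw [hwc]
    have hpy : (Real.sin s : ℂ) ^ 2 + (Real.cos s : ℂ) ^ 2 = 1 := by
      norm_cast
      exact Real.sin_sq_add_cos_sq s
    linear_combination hpy - (Real.sin s : ℂ) ^ 2 * Complex.I_sq - (Real.sin s : ℂ) ^ 2 * hpy
        + (Real.sin s : ℂ) ^ 2 * hpy
  have hpy : (Real.sin s : ℂ) ^ 2 + (Real.cos s : ℂ) ^ 2 = 1 := by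
    norm_cast
    exact Real.sin_sq_add_cos_sq s
  show (1 : ℂ) / 8 * ((w ^ 2 - 2 + w⁻¹ ^ 2)
      * ((Complex.log (1 + w) - Complex.log (1 - w)) / 2) - (w + w⁻¹)) = _
  rw [hlog1, hlog2, hwinv, hwc]
  simp only [Complex.ofReal_div, Complex.ofReal_sub, Complex.ofReal_ofNat]
  set σ : ℂ := (Real.sin s : ℂ)
  set c : ℂ := (Real.cos s : ℂ)
  set L1 : ℂ := (Real.log (2 * Real.cos (s / 2)) : ℂ)
  set L2 : ℂ := (Real.log (2 * Real.sin (s / 2)) : ℂ)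
  set L : ℂ := (Real.log (Real.cot (s / 2)) : ℂ)
  set P : ℂ := (L1 - L2 + ((Real.pi : ℂ) / 2) * Complex.I) / 2
  linear_combination (σ ^ 2 * P / 4) * Complex.I_sq + (P / 4) * hpy
    + (-(σ ^ 2) / 4) * hlogdiffC
end

section
/- Let k be an odd integer and s ∈ (0, π). Then the doubly infinite series ∑_{n ∈ ℤ} e^{i2ns}/((2n−k−2)(2n−k)(2n−k+2)) is absolutely convergent and its sum equals −(iπ/4)·e^{iks}·sin²(s). -/
open Complex Real


open Complex Real intervalIntegral

lemma exp_odd_pi (m : ℤ) (hm : Odd m) : Complex.exp ((m:ℂ) * (Real.pi * Complex.I)) = -1 := by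
  rw [Complex.exp_int_mul, Complex.exp_pi_mul_I, hm.neg_one_zpow]

lemma integralA (n : ℤ) :
    (∫ x in (0:ℝ)..Real.pi, Complex.exp (-2 * Complex.I * n * x) * Complex.sin x)
      = 2 / (1 - 4 * (n:ℂ)^2) := by
  have ha : (2*(n:ℂ)+1) ≠ 0 := by
    intro h'
    have : ((2*n+1 : ℤ) : ℂ) = 0 := by push_cast; exact h'
    have h2 : (2*n+1 : ℤ) = 0 := by exact_mod_cast this
    omega
  have hb : ((1:ℂ) - 2*n) ≠ 0 := by
    intro h'
    have : ((1 - 2*n : ℤ) : ℂ) = 0 := by push_cast; exact h'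
    have h2 : (1 - 2*n : ℤ) = 0 := by exact_mod_cast this
    omega
  have h1 : ((-(2*(n:ℂ)+1)) * Complex.I : ℂ) ≠ 0 := by
    exact mul_ne_zero (neg_ne_zero.2 ha) Complex.I_ne_zero
  have h2 : ((((1:ℂ) - 2*n)) * Complex.I : ℂ) ≠ 0 := mul_ne_zero hb Complex.I_ne_zero
  have key : ∀ x : ℝ, Complex.exp (-2 * Complex.I * n * x) * Complex.sin x
      = (Complex.exp ((-(2*(n:ℂ)+1)) * Complex.I * x) - Complex.exp (((1:ℂ) - 2*n) * Complex.I * x)) * Complex.I / 2 := by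
    intro x
    have r1 : ((-(2*(n:ℂ)+1)) * Complex.I * x) = (-2 * Complex.I * n * x) + (-(x:ℂ) * Complex.I) := by ring
    have r2 : (((1:ℂ) - 2*n) * Complex.I * x) = (-2 * Complex.I * n * x) + ((x:ℂ) * Complex.I) := by ring
    rw [Complex.sin, r1, r2, Complex.exp_add, Complex.exp_add]
    ring
  simp_rw [key]
  rw [intervalIntegral.integral_div, intervalIntegral.integral_mul_const,
    intervalIntegral.integral_sub]
  · rw [integral_exp_mul_complex h1, integral_exp_mul_complex h2]
    have v1 : Complex.exp ((-(2*(n:ℂ)+1)) * Complex.I * Real.pi) = -1 := by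
      have : ((-(2*(n:ℂ)+1)) * Complex.I * Real.pi) = ((-(2*n+1) : ℤ) : ℂ) * (Real.pi * Complex.I) := by
        push_cast; ring
      rw [this, exp_odd_pi]
      exact ⟨-(n+1), by ring⟩
    have v2 : Complex.exp (((1:ℂ) - 2*n) * Complex.I * Real.pi) = -1 := by
      have : (((1:ℂ) - 2*n) * Complex.I * Real.pi) = ((1 - 2*n : ℤ) : ℂ) * (Real.pi * Complex.I) := by
        push_cast; ring
      rw [this, exp_odd_pi]
      exact ⟨-n, by ring⟩
    have z0 : ((0:ℝ):ℂ) = 0 := by norm_num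
    rw [z0, mul_zero, mul_zero, Complex.exp_zero, v1, v2]
    have h3 : (1 - 4 * (n:ℂ)^2) ≠ 0 := by
      intro h
      rcases mul_eq_zero.1 (show ((1:ℂ)-2*n)*(2*n+1) = 0 by linear_combination h) with h'|h'
      exacts [hb h', ha h']
    rw [div_sub_div _ _ h1 h2, div_mul_eq_mul_div, div_div,
      div_eq_div_iff (mul_ne_zero (mul_ne_zero h1 h2) two_ne_zero) h3]
    ring
  · exact ((continuous_const.mul Complex.continuous_ofReal).cexp).intervalIntegrable _ _
  · exact ((continuous_const.mul Complex.continuous_ofReal).cexp).intervalIntegrable _ _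

open Complex Real intervalIntegral

lemma perAbsSin : Function.Periodic (fun x : ℝ => ((|Real.sin x| : ℝ) : ℂ)) Real.pi := by
  intro x
  simp [Real.sin_add_pi]

noncomputable def Fabs : C(AddCircle Real.pi, ℂ) :=
  ⟨perAbsSin.lift, by
    apply Continuous.quotient_liftOn'
    exact Complex.continuous_ofReal.comp (continuous_abs.comp Real.continuous_sin)⟩

lemma Fabs_coe (x : ℝ) : Fabs (x : AddCircle Real.pi) = ((|Real.sin x| : ℝ) : ℂ) := rfl

lemma fourierCoeff_Fabs (n : ℤ) :
    haveI : Fact (0 < Real.pi) := ⟨Real.pi_pos⟩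
    fourierCoeff (Fabs : AddCircle Real.pi → ℂ) n
      = (1 / (Real.pi : ℂ)) * (2 / (1 - 4 * (n:ℂ)^2)) := by
  haveI : Fact (0 < Real.pi) := ⟨Real.pi_pos⟩
  rw [fourierCoeff_eq_intervalIntegral _ n 0]
  rw [zero_add]
  have hcongr : ∀ x ∈ Set.uIcc (0:ℝ) Real.pi,
      (fourier (-n) (x : AddCircle Real.pi) : ℂ) • Fabs (x : AddCircle Real.pi)
        = Complex.exp (-2 * Complex.I * n * x) * Complex.sin x := by
    intro x hx
    rw [Set.uIcc_of_le Real.pi_pos.le] at hx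
    rw [fourier_coe_apply, Fabs_coe, smul_eq_mul,
      _root_.abs_of_nonneg (Real.sin_nonneg_of_nonneg_of_le_pi hx.1 hx.2), Complex.ofReal_sin]
    congr 2
    have hπ : (Real.pi : ℂ) ≠ 0 := Complex.ofReal_ne_zero.2 Real.pi_ne_zero
    field_simp
    push_cast; ring
  rw [intervalIntegral.integral_congr hcongr,
    (by norm_num : (∫ x in (0:ℝ)..Real.pi, Complex.exp (-2 * Complex.I * n * x) * Complex.sin x)
      = ∫ x in (0:ℝ)..Real.pi, Complex.exp (-2 * Complex.I * n * x) * Complex.sin x)]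
  rw [integralA n, Complex.real_smul]
  push_cast
  ring


lemma sumCoeff : Summable (fun n : ℤ => (1/(Real.pi:ℂ)) * (2/(1-4*(n:ℂ)^2))) := by
  apply Summable.of_norm_bounded_eventually (g := fun n : ℤ => 1/(n:ℝ)^2)
    (by simpa using (summable_one_div_int_pow (p := 2)).2 one_lt_two)
  filter_upwards [(Set.finite_singleton (0:ℤ)).eventually_cofinite_notMem] with n hn
  have hn0 : n ≠ 0 := by simpa using hn
  have hn2 : (1:ℝ) ≤ (n:ℝ)^2 := by
    have : (1:ℤ) ≤ n^2 := by nlinarith [sq_nonneg n, sq_pos_of_ne_zero hn0]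
    exact_mod_cast this
  have hcast : ((1:ℂ) - 4*(n:ℂ)^2) = (((1:ℝ) - 4*(n:ℝ)^2 : ℝ) : ℂ) := by push_cast; ring
  rw [norm_mul, norm_div, norm_div, hcast]
  simp only [norm_one, Complex.norm_real, Complex.norm_ofNat, Real.norm_eq_abs]
  rw [abs_of_pos Real.pi_pos, abs_of_nonpos (by nlinarith : (1:ℝ) - 4*(n:ℝ)^2 ≤ 0)]
  rw [div_mul_div_comm, one_mul, div_le_div_iff₀ (by nlinarith [Real.pi_pos]) (by nlinarith)]
  nlinarith [Real.pi_gt_three]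

lemma hasSumT (s : ℝ) (hs : s ∈ Set.Ioo 0 Real.pi) :
    HasSum (fun n : ℤ => Complex.exp (Complex.I * 2 * (n:ℂ) * (s:ℂ))
        * (2 / ((2*(n:ℂ) - 1) * (2*(n:ℂ) + 1))))
      (-((Real.pi : ℂ) * (Real.sin s : ℂ))) := by
  haveI : Fact (0 < Real.pi) := ⟨Real.pi_pos⟩
  have hπ : (Real.pi : ℂ) ≠ 0 := Complex.ofReal_ne_zero.2 Real.pi_ne_zero
  have hsum : Summable (fourierCoeff (Fabs : AddCircle Real.pi → ℂ)) := by
    have : (fourierCoeff (Fabs : AddCircle Real.pi → ℂ))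
        = fun n : ℤ => (1/(Real.pi:ℂ)) * (2/(1-4*(n:ℂ)^2)) := funext fun n => fourierCoeff_Fabs n
    rw [this]; exact sumCoeff
  have h := has_pointwise_sum_fourier_series_of_summable hsum (s : AddCircle Real.pi)
  have H := h.mul_left (-(Real.pi : ℂ))
  have hval : Fabs (s : AddCircle Real.pi) = (Real.sin s : ℂ) := by
    rw [Fabs_coe, _root_.abs_of_nonneg (Real.sin_nonneg_of_nonneg_of_le_pi hs.1.le hs.2.le)]
  rw [hval] at H
  have hterm : (fun n : ℤ => -(Real.pi : ℂ)
        * (fourierCoeff (Fabs : AddCircle Real.pi → ℂ) n • fourier n (s : AddCircle Real.pi)))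
      = fun n : ℤ => Complex.exp (Complex.I * 2 * (n:ℂ) * (s:ℂ))
        * (2 / ((2*(n:ℂ) - 1) * (2*(n:ℂ) + 1))) := by
    funext n
    rw [fourierCoeff_Fabs n, smul_eq_mul, fourier_coe_apply]
    have e1 : (2 * (Real.pi:ℂ) * Complex.I * (n:ℂ) * (s:ℂ) / (Real.pi:ℂ))
        = Complex.I * 2 * (n:ℂ) * (s:ℂ) := by field_simp
    rw [e1]
    have e2 : ((2*(n:ℂ) - 1) * (2*(n:ℂ) + 1)) = -(1 - 4*(n:ℂ)^2) := by ring
    rw [e2, div_neg]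
    have hn3 : (1:ℂ) - 4*(n:ℂ)^2 ≠ 0 := by
      intro h
      have h' : ((1-2*n : ℤ):ℂ) * ((1+2*n : ℤ):ℂ) = 0 := by push_cast; linear_combination h
      rcases mul_eq_zero.1 h' with h'' | h'' <;>
        · have := (Int.cast_eq_zero (α := ℂ)).1 h''; omega
    field_simp [hn3]
  rw [hterm] at H
  convert H using 1
  · rfl
  ring

lemma norm_exp_I2 (m : ℤ) (s : ℝ) : ‖Complex.exp (Complex.I * 2 * (m:ℂ) * (s:ℂ))‖ = 1 := by
  have h : Complex.I * 2 * (m:ℂ) * (s:ℂ) = ((2*m*s : ℝ) : ℂ) * Complex.I := by push_cast; ring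
  rw [h, Complex.norm_exp_ofReal_mul_I]

lemma odd_cast_ne (m : ℤ) (hm : Odd m) : (m : ℂ) ≠ 0 := by
  intro h
  have : m = 0 := by exact_mod_cast h
  rcases hm with ⟨r, hr⟩; omega

lemma summable_normG (s : ℝ) :
    Summable (fun n : ℤ => ‖Complex.exp (Complex.I * 2 * (n:ℂ) * (s:ℂ))
      * (2 / ((2*(n:ℂ) - 1) * (2*(n:ℂ) + 1)))‖) := by
  apply Summable.of_norm_bounded_eventually (g := fun n : ℤ => 1/(n:ℝ)^2)
    (by simpa using (summable_one_div_int_pow (p := 2)).2 one_lt_two)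
  filter_upwards [(Set.finite_singleton (0:ℤ)).eventually_cofinite_notMem] with n hn
  have hn0 : n ≠ 0 := by simpa using hn
  have hn2 : (1:ℝ) ≤ (n:ℝ)^2 := by
    have : (1:ℤ) ≤ n^2 := by nlinarith [sq_nonneg n, sq_pos_of_ne_zero hn0]
    exact_mod_cast this
  rw [Real.norm_eq_abs, abs_norm, norm_mul, norm_exp_I2, one_mul]
  have hcast : ((2*(n:ℂ) - 1) * (2*(n:ℂ) + 1)) = (((4*(n:ℝ)^2 - 1 : ℝ)) : ℂ) := by push_cast; ring
  rw [norm_div, hcast, Complex.norm_real, Complex.norm_ofNat, Real.norm_eq_abs,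
    _root_.abs_of_nonneg (by nlinarith : (0:ℝ) ≤ 4*(n:ℝ)^2 - 1)]
  rw [div_le_div_iff₀ (by nlinarith) (by nlinarith)]
  nlinarith


lemma hasSumT' (s : ℝ) (hs : s ∈ Set.Ioo 0 Real.pi) :
    HasSum (fun n : ℤ => Complex.exp (Complex.I * 2 * (n:ℂ) * (s:ℂ))
        * (2 / ((2*(n:ℂ) - 3) * (2*(n:ℂ) - 1))))
      (Complex.exp (Complex.I * 2 * (s:ℂ)) * -((Real.pi : ℂ) * (Real.sin s : ℂ))) := by
  have hshift : (fun n : ℤ => Complex.exp (Complex.I * 2 * (s:ℂ))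
        * (Complex.exp (Complex.I * 2 * (n:ℂ) * (s:ℂ)) * (2 / ((2*(n:ℂ) - 1) * (2*(n:ℂ) + 1))))) ∘
      (fun n : ℤ => Equiv.subRight (1:ℤ) n)
      = (fun n : ℤ => Complex.exp (Complex.I * 2 * (n:ℂ) * (s:ℂ))
        * (2 / ((2*(n:ℂ) - 3) * (2*(n:ℂ) - 1)))) := by
    funext n
    simp only [Function.comp_apply, Equiv.subRight_apply]
    push_cast
    rw [← mul_assoc, ← Complex.exp_add]
    rw [show Complex.I * 2 * (s:ℂ) + Complex.I * 2 * ((n:ℂ) - 1) * (s:ℂ)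
        = Complex.I * 2 * (n:ℂ) * (s:ℂ) by ring]
    rw [show (2*((n:ℂ)-1) - 1) = 2*(n:ℂ) - 3 by ring,
      show (2*((n:ℂ)-1) + 1) = 2*(n:ℂ) - 1 by ring]
  rw [← hshift]
  exact ((Equiv.subRight (1:ℤ)).hasSum_iff).2
    ((hasSumT s hs).mul_left (Complex.exp (Complex.I * 2 * (s:ℂ))))

lemma summable_normG' (s : ℝ) :
    Summable (fun n : ℤ => ‖Complex.exp (Complex.I * 2 * (n:ℂ) * (s:ℂ))
      * (2 / ((2*(n:ℂ) - 3) * (2*(n:ℂ) - 1)))‖) := by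
  have hshift : (fun n : ℤ => ‖Complex.exp (Complex.I * 2 * (s:ℂ))
        * (Complex.exp (Complex.I * 2 * (n:ℂ) * (s:ℂ)) * (2 / ((2*(n:ℂ) - 1) * (2*(n:ℂ) + 1))))‖) ∘
      (fun n : ℤ => Equiv.subRight (1:ℤ) n)
      = (fun n : ℤ => ‖Complex.exp (Complex.I * 2 * (n:ℂ) * (s:ℂ))
        * (2 / ((2*(n:ℂ) - 3) * (2*(n:ℂ) - 1)))‖) := by
    funext n
    simp only [Function.comp_apply, Equiv.subRight_apply]
    congr 1
    push_cast
    rw [← mul_assoc, ← Complex.exp_add]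
    rw [show Complex.I * 2 * (s:ℂ) + Complex.I * 2 * ((n:ℂ) - 1) * (s:ℂ)
        = Complex.I * 2 * (n:ℂ) * (s:ℂ) by ring]
    rw [show (2*((n:ℂ)-1) - 1) = 2*(n:ℂ) - 3 by ring,
      show (2*((n:ℂ)-1) + 1) = 2*(n:ℂ) - 1 by ring]
  rw [← hshift]
  refine ((Equiv.subRight (1:ℤ)).summable_iff
    (f := fun n : ℤ => ‖Complex.exp (Complex.I * 2 * (s:ℂ))
        * (Complex.exp (Complex.I * 2 * (n:ℂ) * (s:ℂ))
          * (2 / ((2*(n:ℂ) - 1) * (2*(n:ℂ) + 1))))‖)).2 ?_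
  have base := (summable_normG s).mul_left ‖Complex.exp (Complex.I * 2 * (s:ℂ))‖
  simp only [← norm_mul] at base
  exact base

/-- For `k` odd and `s ∈ (0, π)`, the doubly infinite series
`∑_{n ∈ ℤ} e^{i2ns}/((2n−k−2)(2n−k)(2n−k+2))` converges absolutely with sum
`−(iπ/4)·e^{iks}·sin² s`. -/
theorem tsum_int_exp_shifted_cubic (k : ℤ) (hk : Odd k) (s : ℝ) (hs : s ∈ Set.Ioo 0 Real.pi) :
    Summable (fun n : ℤ => ‖Complex.exp (Complex.I * 2 * (n : ℂ) * (s : ℂ))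
        / ((2 * (n : ℂ) - (k : ℂ) - 2) * (2 * (n : ℂ) - (k : ℂ))
          * (2 * (n : ℂ) - (k : ℂ) + 2))‖)
    ∧ (∑' n : ℤ, Complex.exp (Complex.I * 2 * (n : ℂ) * (s : ℂ))
        / ((2 * (n : ℂ) - (k : ℂ) - 2) * (2 * (n : ℂ) - (k : ℂ))
          * (2 * (n : ℂ) - (k : ℂ) + 2)))
      = -(Complex.I * (Real.pi : ℂ) / 4) * Complex.exp (Complex.I * (k : ℂ) * (s : ℂ))
          * (Real.sin s : ℂ) ^ 2 := by
  obtain ⟨j, hj⟩ := hk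
  have hodd : ∀ m : ℤ, Odd m → ((m:ℂ)) ≠ 0 := odd_cast_ne
  have hG := hasSumT s hs
  have hG' := hasSumT' s hs
  have hcomp : ((fun n : ℤ => Complex.exp (Complex.I * 2 * (n : ℂ) * (s : ℂ))
        / ((2 * (n : ℂ) - (k : ℂ) - 2) * (2 * (n : ℂ) - (k : ℂ))
          * (2 * (n : ℂ) - (k : ℂ) + 2))) ∘ (fun n : ℤ => Equiv.addRight j n))
      = fun n : ℤ => (1/8 : ℂ) * Complex.exp (Complex.I * 2 * (j:ℂ) * (s:ℂ))
        * ((Complex.exp (Complex.I * 2 * (n:ℂ) * (s:ℂ)) * (2 / ((2*(n:ℂ) - 3) * (2*(n:ℂ) - 1))))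
          - (Complex.exp (Complex.I * 2 * (n:ℂ) * (s:ℂ)) * (2 / ((2*(n:ℂ) - 1) * (2*(n:ℂ) + 1))))) := by
    funext n
    simp only [Function.comp_apply, Equiv.coe_addRight]
    have hkc : (k : ℂ) = 2*(j:ℂ) + 1 := by rw [hj]; push_cast; ring
    push_cast
    rw [hkc]
    rw [show Complex.I * 2 * ((n:ℂ) + (j:ℂ)) * (s:ℂ)
        = Complex.I * 2 * (j:ℂ) * (s:ℂ) + Complex.I * 2 * (n:ℂ) * (s:ℂ) by ring,
      Complex.exp_add]
    have ha : (2*(n:ℂ) - 3) ≠ 0 := by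
      intro h
      have h' : ((2*n-3 : ℤ):ℂ) = 0 := by push_cast; linear_combination h
      have := (Int.cast_eq_zero (α := ℂ)).1 h'; omega
    have hb : (2*(n:ℂ) - 1) ≠ 0 := by
      intro h
      have h' : ((2*n-1 : ℤ):ℂ) = 0 := by push_cast; linear_combination h
      have := (Int.cast_eq_zero (α := ℂ)).1 h'; omega
    have hc : (2*(n:ℂ) + 1) ≠ 0 := by
      intro h
      have h' : ((2*n+1 : ℤ):ℂ) = 0 := by push_cast; linear_combination h
      have := (Int.cast_eq_zero (α := ℂ)).1 h'; omega
    rw [show (2*((n:ℂ)+(j:ℂ)) - (2*(j:ℂ)+1) - 2) = 2*(n:ℂ) - 3 by ring,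
      show (2*((n:ℂ)+(j:ℂ)) - (2*(j:ℂ)+1)) = 2*(n:ℂ) - 1 by ring]
    rw [show (2*(n:ℂ) - 1 + 2) = 2*(n:ℂ) + 1 by ring]
    field_simp [ha, hb, hc]
    ring
  have hfsum : HasSum (fun n : ℤ => Complex.exp (Complex.I * 2 * (n : ℂ) * (s : ℂ))
        / ((2 * (n : ℂ) - (k : ℂ) - 2) * (2 * (n : ℂ) - (k : ℂ))
          * (2 * (n : ℂ) - (k : ℂ) + 2)))
      ((1/8 : ℂ) * Complex.exp (Complex.I * 2 * (j:ℂ) * (s:ℂ))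
        * ((Complex.exp (Complex.I * 2 * (s:ℂ)) * -((Real.pi : ℂ) * (Real.sin s : ℂ)))
          - (-((Real.pi : ℂ) * (Real.sin s : ℂ))))) := by
    rw [← (Equiv.addRight j).hasSum_iff]
    rw [show ((fun n : ℤ => Complex.exp (Complex.I * 2 * (n : ℂ) * (s : ℂ))
        / ((2 * (n : ℂ) - (k : ℂ) - 2) * (2 * (n : ℂ) - (k : ℂ))
          * (2 * (n : ℂ) - (k : ℂ) + 2))) ∘ (Equiv.addRight j))
        = ((fun n : ℤ => Complex.exp (Complex.I * 2 * (n : ℂ) * (s : ℂ))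
        / ((2 * (n : ℂ) - (k : ℂ) - 2) * (2 * (n : ℂ) - (k : ℂ))
          * (2 * (n : ℂ) - (k : ℂ) + 2))) ∘ (fun n : ℤ => Equiv.addRight j n)) from rfl, hcomp]
    exact (hG'.sub hG).mul_left _
  constructor
  · rw [← (Equiv.addRight j).summable_iff]
    have heq : ((fun n : ℤ => ‖Complex.exp (Complex.I * 2 * (n : ℂ) * (s : ℂ))
        / ((2 * (n : ℂ) - (k : ℂ) - 2) * (2 * (n : ℂ) - (k : ℂ))
          * (2 * (n : ℂ) - (k : ℂ) + 2))‖) ∘ (fun n : ℤ => Equiv.addRight j n))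
        = fun n : ℤ => ‖(1/8 : ℂ) * Complex.exp (Complex.I * 2 * (j:ℂ) * (s:ℂ))
        * ((Complex.exp (Complex.I * 2 * (n:ℂ) * (s:ℂ)) * (2 / ((2*(n:ℂ) - 3) * (2*(n:ℂ) - 1))))
          - (Complex.exp (Complex.I * 2 * (n:ℂ) * (s:ℂ)) * (2 / ((2*(n:ℂ) - 1) * (2*(n:ℂ) + 1)))))‖ := by
      funext n
      exact congrArg Norm.norm (congrFun hcomp n)
    rw [show ((fun n : ℤ => ‖Complex.exp (Complex.I * 2 * (n : ℂ) * (s : ℂ))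
        / ((2 * (n : ℂ) - (k : ℂ) - 2) * (2 * (n : ℂ) - (k : ℂ))
          * (2 * (n : ℂ) - (k : ℂ) + 2))‖) ∘ (Equiv.addRight j))
        = ((fun n : ℤ => ‖Complex.exp (Complex.I * 2 * (n : ℂ) * (s : ℂ))
        / ((2 * (n : ℂ) - (k : ℂ) - 2) * (2 * (n : ℂ) - (k : ℂ))
          * (2 * (n : ℂ) - (k : ℂ) + 2))‖) ∘ (fun n : ℤ => Equiv.addRight j n)) from rfl, heq]
    simp only [norm_mul]
    apply Summable.mul_left
    apply Summable.of_norm_bounded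
      (g := fun n : ℤ => ‖Complex.exp (Complex.I * 2 * (n:ℂ) * (s:ℂ))
          * (2 / ((2*(n:ℂ) - 3) * (2*(n:ℂ) - 1)))‖
        + ‖Complex.exp (Complex.I * 2 * (n:ℂ) * (s:ℂ))
          * (2 / ((2*(n:ℂ) - 1) * (2*(n:ℂ) + 1)))‖)
      ((summable_normG' s).add (summable_normG s))
    intro n
    rw [Real.norm_eq_abs, abs_norm]
    exact norm_sub_le _ _
  · rw [hfsum.tsum_eq]
    have hsin : Complex.exp (Complex.I * 2 * (s:ℂ)) - 1
        = Complex.exp (Complex.I * (s:ℂ)) * (2 * Complex.I * (Real.sin s : ℂ)) := by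
      rw [Complex.ofReal_sin, Complex.sin]
      rw [show Complex.I * 2 * (s:ℂ) = (s:ℂ)*Complex.I + (s:ℂ)*Complex.I by ring, Complex.exp_add,
        show Complex.I * (s:ℂ) = (s:ℂ)*Complex.I by ring,
        show (-(s:ℂ)*Complex.I) = -((s:ℂ)*Complex.I) by ring, Complex.exp_neg]
      field_simp
      linear_combination (Complex.exp ((s:ℂ)*Complex.I)^2 - 1) * Complex.I_sq
    have hk2 : Complex.exp (Complex.I * (k:ℂ) * (s:ℂ))
        = Complex.exp (Complex.I * 2 * (j:ℂ) * (s:ℂ)) * Complex.exp (Complex.I * (s:ℂ)) := by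
      rw [← Complex.exp_add]
      congr 1
      rw [hj]
      push_cast
      ring
    rw [hk2]
    linear_combination (-(Real.pi : ℂ) * (Real.sin s : ℂ)
      * Complex.exp (Complex.I * 2 * (j:ℂ) * (s:ℂ)) / 8) * hsin
end

section
/- Let k be an even integer and x ∈ ℝ. Then the principal value (1/π)·PV∫ u_k'(y)/(x−y) dy exists and equals |k|·(x+i)^k/(x²+1)^{k/2+1}. -/
open Filter MeasureTheory

open Set Topology

/-- `u_k(y) = (y+i)^k/(y²+1)^{k/2}`, with `(y+i)^k` a `zpow` in `ℂ` and `(y²+1)^{k/2}` a real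
power. -/
noncomputable def uFun (k : ℤ) (y : ℝ) : ℂ :=
  ((y : ℂ) + Complex.I) ^ k / ((((y ^ 2 + 1 : ℝ) ^ ((k : ℝ) / 2) : ℝ)) : ℂ)

lemma sub_I_ne (y : ℝ) : (y:ℂ) - Complex.I ≠ 0 := by
  intro h
  have := congrArg Complex.im h
  simp at this

lemma add_I_ne (y : ℝ) : (y:ℂ) + Complex.I ≠ 0 := by
  intro h
  have := congrArg Complex.im h
  simp at this

lemma abs_sub_I_sq (y : ℝ) : (‖(y:ℂ) - Complex.I‖)^2 = 1 + y^2 := by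
  rw [Complex.sq_norm]
  simp [Complex.normSq_apply]
  ring

lemma one_le_abs_sub_I (y : ℝ) : 1 ≤ ‖(y:ℂ) - Complex.I‖ := by
  nlinarith [abs_sub_I_sq y, norm_nonneg ((y:ℂ) - Complex.I), sq_nonneg y]

lemma abs_add_I (y : ℝ) : ‖(y:ℂ) + Complex.I‖ = ‖(y:ℂ) - Complex.I‖ := by
  have h1 : (‖(y:ℂ) + Complex.I‖)^2 = 1 + y^2 := by
    rw [Complex.sq_norm]; simp [Complex.normSq_apply]; ring
  nlinarith [abs_sub_I_sq y, norm_nonneg ((y:ℂ) - Complex.I),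
    norm_nonneg ((y:ℂ) + Complex.I)]

lemma S_eq (x ε : ℝ) : {y : ℝ | ε ≤ |x - y|} = Iic (x-ε) ∪ Ici (x+ε) := by
  ext y
  simp only [mem_setOf_eq, mem_union, mem_Iic, mem_Ici, le_abs]
  constructor
  · rintro (h | h)
    · left; linarith
    · right; linarith
  · rintro (h | h)
    · left; linarith
    · right; linarith

lemma S_meas (x ε : ℝ) : MeasurableSet {y : ℝ | ε ≤ |x - y|} := by
  rw [S_eq]; exact measurableSet_Iic.union measurableSet_Ici

lemma sub_ofReal_ne {x y : ℝ} (h : x ≠ y) : (x:ℂ) - (y:ℂ) ≠ 0 := by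
  rw [← Complex.ofReal_sub]
  exact_mod_cast sub_ne_zero.mpr h

lemma mem_S_ne {x ε y : ℝ} (hε : 0 < ε) (hy : y ∈ {y : ℝ | ε ≤ |x - y|}) : x ≠ y := by
  intro h
  simp only [mem_setOf_eq, h, sub_self, abs_zero] at hy
  linarith

lemma integrableOn_of_bound {f : ℝ → ℂ} {s : Set ℝ} (hs : MeasurableSet s)
    (hm : AEStronglyMeasurable f (volume.restrict s)) (C : ℝ)
    (hb : ∀ y ∈ s, ‖f y‖ ≤ C * (1+y^2)⁻¹) : IntegrableOn f s := by
  refine Integrable.mono' ((integrable_inv_one_add_sq.const_mul C).restrict) hm ?_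
  rw [ae_restrict_iff' hs]
  filter_upwards with y hy using hb y hy

lemma cont_inv_pow (n : ℕ) : Continuous (fun y : ℝ => (((y:ℂ) - Complex.I)⁻¹)^n) :=
  ((Complex.continuous_ofReal.sub continuous_const).inv₀ (fun y => sub_I_ne y)).pow n

lemma norm_inv_pow (y : ℝ) (n : ℕ) :
    ‖(((y:ℂ) - Complex.I)⁻¹)^n‖ = ((‖(y:ℂ) - Complex.I‖)⁻¹)^n := by
  simp [map_pow]

lemma intOn_pow (x : ℝ) (n : ℕ) (hn : 2 ≤ n) {s : Set ℝ} (hs : MeasurableSet s) :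
    IntegrableOn (fun y : ℝ => (((y:ℂ) - Complex.I)⁻¹)^n) s := by
  refine integrableOn_of_bound hs ((cont_inv_pow n).aestronglyMeasurable.restrict) 1 ?_
  intro y _
  rw [norm_inv_pow, one_mul]
  have h1 : (‖(y:ℂ) - Complex.I‖)⁻¹ ≤ 1 :=
    inv_le_one_of_one_le₀ (one_le_abs_sub_I y)
  have h0 : (0:ℝ) ≤ (‖(y:ℂ) - Complex.I‖)⁻¹ := by positivity
  calc ((‖(y:ℂ) - Complex.I‖)⁻¹)^n ≤ ((‖(y:ℂ) - Complex.I‖)⁻¹)^2 :=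
        pow_le_pow_of_le_one h0 h1 hn
    _ = (1+y^2)⁻¹ := by rw [inv_pow, abs_sub_I_sq]

lemma intOn_main (x : ℝ) {ε : ℝ} (hε : 0 < ε) (p q : ℕ) (hpq : p + 1 ≤ q) :
    IntegrableOn (fun y : ℝ => ((y:ℂ) + Complex.I)^p * (((y:ℂ) - Complex.I)⁻¹)^q
      / ((x:ℂ) - (y:ℂ))) {y : ℝ | ε ≤ |x - y|} := by
  set S := {y : ℝ | ε ≤ |x - y|} with hS
  have hcont : ContinuousOn (fun y : ℝ => ((y:ℂ) + Complex.I)^p * (((y:ℂ) - Complex.I)⁻¹)^q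
      / ((x:ℂ) - (y:ℂ))) S := by
    apply ContinuousOn.div
    · exact (((Complex.continuous_ofReal.add continuous_const).pow p).mul
        (cont_inv_pow q)).continuousOn
    · exact (continuous_const.sub Complex.continuous_ofReal).continuousOn
    · intro y hy
      exact sub_ofReal_ne (mem_S_ne hε hy)
  refine integrableOn_of_bound (S_meas x ε) (hcont.aestronglyMeasurable (S_meas x ε))
    ((2+|x|) * max 1 ε⁻¹) ?_
  intro y hy
  set a := ‖(y:ℂ) - Complex.I‖ with ha
  have ha1 : 1 ≤ a := one_le_abs_sub_I y
  have ha0 : 0 < a := lt_of_lt_of_le one_pos ha1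
  have hasq : a^2 = 1 + y^2 := abs_sub_I_sq y
  have hxy : ε ≤ |x - y| := hy
  have hxy0 : 0 < |x - y| := lt_of_lt_of_le hε hxy
  have hnorm : ‖((y:ℂ) + Complex.I)^p * (((y:ℂ) - Complex.I)⁻¹)^q / ((x:ℂ) - (y:ℂ))‖
      = a^p * (a⁻¹)^q / |x - y| := by
    rw [norm_div, norm_mul, norm_inv_pow]
    congr 2
    · simp [map_pow, abs_add_I y, ha]
    · rw [← Complex.ofReal_sub, Complex.norm_real, Real.norm_eq_abs]
  rw [hnorm]
  -- key : a ≤ C * |x - y|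
  have haub : a ≤ 1 + |y| := by
    nlinarith [abs_nonneg y, sq_abs y]
  have hyx : |y| ≤ |x| + |x - y| := by
    calc |y| = |x + (y - x)| := by ring_nf
      _ ≤ |x| + |y - x| := abs_add_le _ _
      _ = |x| + |x - y| := by rw [abs_sub_comm]
  have hkey : a ≤ (2+|x|) * max 1 ε⁻¹ * |x - y| := by
    rcases le_or_gt 1 |x - y| with h1 | h1
    · have hm : (1:ℝ) ≤ max 1 ε⁻¹ := le_max_left _ _
      have e1 : (0:ℝ) ≤ (1+|x|) * (|x - y| - 1) :=
        mul_nonneg (by positivity) (by linarith)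
      have e2 : (0:ℝ) ≤ ((2+|x|) * |x - y|) * (max 1 ε⁻¹ - 1) :=
        mul_nonneg (mul_nonneg (by positivity) (abs_nonneg _)) (by linarith)
      nlinarith [e1, e2]
    · have hm : ε⁻¹ ≤ max 1 ε⁻¹ := le_max_right _ _
      have hεinv : (1:ℝ) ≤ ε⁻¹ * |x - y| := by
        rw [inv_mul_eq_div, le_div_iff₀ hε, one_mul]; exact hxy
      have hax : a ≤ 2 + |x| := by nlinarith [abs_nonneg x]
      have e3 : (1:ℝ) ≤ max 1 ε⁻¹ * |x-y| :=
        le_trans hεinv (mul_le_mul_of_nonneg_right hm hxy0.le)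
      have e4 : (2+|x|) * 1 ≤ (2+|x|) * (max 1 ε⁻¹ * |x-y|) :=
        mul_le_mul_of_nonneg_left e3 (by positivity)
      nlinarith [e4, hax]
  -- reduce power product
  obtain ⟨d, rfl⟩ : ∃ d, q = p + 1 + d := ⟨q - (p+1), by omega⟩
  have hprod : a^p * (a⁻¹)^(p+1+d) = a⁻¹ * (a⁻¹)^d := by
    rw [pow_add, pow_add, pow_one, inv_pow]
    rw [← mul_assoc, ← mul_assoc, mul_inv_cancel₀ (pow_ne_zero _ ha0.ne'), one_mul]
  rw [hprod]
  have hd1 : (a⁻¹)^d ≤ 1 := pow_le_one₀ (by positivity) (inv_le_one_of_one_le₀ ha1)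
  have h5 : a⁻¹ * (a⁻¹)^d ≤ a⁻¹ := by
    nlinarith [hd1, inv_nonneg.mpr ha0.le, pow_nonneg (inv_nonneg.mpr ha0.le) d]
  have hfin : a⁻¹ / |x - y| ≤ (2+|x|) * max 1 ε⁻¹ * (1+y^2)⁻¹ := by
    rw [← hasq, ← div_eq_mul_inv, div_le_div_iff₀ hxy0 (by positivity : (0:ℝ) < a^2)]
    have h6 : a⁻¹ * a^2 = a := by field_simp
    rw [h6]; exact hkey
  calc a⁻¹ * (a⁻¹)^d / |x - y| ≤ a⁻¹ / |x - y| := (div_le_div_iff_of_pos_right hxy0).mpr h5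
    _ ≤ (2+|x|) * max 1 ε⁻¹ * (1+y^2)⁻¹ := hfin

lemma zpow_neg_natCast (z : ℂ) (n : ℕ) : z ^ (-(n:ℤ)) = (z⁻¹)^n := by
  rw [zpow_neg, zpow_natCast, inv_pow]

lemma tendsto_inv_sub_I {l : Filter ℝ} (hl : Tendsto (fun y : ℝ => |y|) l atTop) :
    Tendsto (fun y : ℝ => ((y:ℂ) - Complex.I)⁻¹) l (𝓝 0) := by
  apply squeeze_zero_norm' ?_ (tendsto_inv_atTop_zero.comp hl)
  filter_upwards [hl.eventually_ge_atTop 1] with y hy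
  have habs : |y| ≤ ‖(y:ℂ) - Complex.I‖ := by
    nlinarith [abs_sub_I_sq y, abs_nonneg y, norm_nonneg ((y:ℂ) - Complex.I), sq_abs y]
  rw [norm_inv]
  exact inv_anti₀ (by linarith) habs

lemma hasDerivAt_Gpow (n : ℕ) (y : ℝ) :
    HasDerivAt (fun t : ℝ => -(((n:ℂ)+1)⁻¹) * (((t:ℂ) - Complex.I)⁻¹)^(n+1))
      ((((y:ℂ) - Complex.I)⁻¹)^(n+2)) y := by
  have h0 : HasDerivAt (fun z : ℂ => z - Complex.I) 1 ((y:ℂ)) :=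
    (hasDerivAt_id _).sub_const _
  have h1 : HasDerivAt (fun z : ℂ => (z - Complex.I)^(-((n:ℤ)+1)))
      ((↑(-((n:ℤ)+1)) * ((y:ℂ) - Complex.I)^(-((n:ℤ)+1)-1)) * 1) ((y:ℂ)) :=
    HasDerivAt.comp ((y:ℂ)) (hasDerivAt_zpow _ _ (Or.inl (sub_I_ne y))) h0
  have h2 := (h1.comp_ofReal).const_mul (-(((n:ℂ)+1)⁻¹))
  have hne : ((n:ℂ)+1) ≠ 0 := Nat.cast_add_one_ne_zero n
  have hfun : (fun t : ℝ => -(((n:ℂ)+1)⁻¹) * ((fun z : ℂ => (z - Complex.I)^(-((n:ℤ)+1))) ((t:ℂ))))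
      = (fun t : ℝ => -(((n:ℂ)+1)⁻¹) * (((t:ℂ) - Complex.I)⁻¹)^(n+1)) := by
    funext t
    simp only
    rw [show (-((n:ℤ)+1)) = -(((n+1:ℕ)):ℤ) by push_cast; ring, zpow_neg_natCast]
  rw [hfun] at h2
  refine HasDerivAt.congr_deriv h2 ?_
  rw [show (-((n:ℤ)+1)-1) = -(((n+2:ℕ)):ℤ) by push_cast; ring, zpow_neg_natCast]
  rw [mul_one, ← mul_assoc]
  rw [show -(((n:ℂ)+1)⁻¹) * ↑(-((n:ℤ)+1)) = 1 by push_cast; field_simp]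
  rw [one_mul]

lemma tendsto_Gpow {l : Filter ℝ} (hl : Tendsto (fun y : ℝ => |y|) l atTop) (n : ℕ) :
    Tendsto (fun t : ℝ => -(((n:ℂ)+1)⁻¹) * (((t:ℂ) - Complex.I)⁻¹)^(n+1)) l (𝓝 0) := by
  have := ((tendsto_inv_sub_I hl).pow (n+1)).const_mul (-(((n:ℂ)+1)⁻¹))
  simpa [zero_pow] using this

lemma int_vpow_eq (x : ℝ) (n : ℕ) {ε : ℝ} (hε : 0 < ε) :
    ∫ y in {y : ℝ | ε ≤ |x - y|}, (((y:ℂ) - Complex.I)⁻¹)^(n+2)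
      = (-(((n:ℂ)+1)⁻¹) * (((((x-ε):ℝ):ℂ) - Complex.I)⁻¹)^(n+1))
        - (-(((n:ℂ)+1)⁻¹) * (((((x+ε):ℝ):ℂ) - Complex.I)⁻¹)^(n+1)) := by
  have hdisj : Disjoint (Iic (x-ε)) (Ici (x+ε)) := by
    rw [Iic_disjoint_Ici]
    · linarith
  rw [S_eq, setIntegral_union hdisj measurableSet_Ici
      (intOn_pow x (n+2) (by omega) measurableSet_Iic)
      (intOn_pow x (n+2) (by omega) measurableSet_Ici)]
  rw [integral_Ici_eq_integral_Ioi]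
  rw [integral_Iic_of_hasDerivAt_of_tendsto' (fun y _ => hasDerivAt_Gpow n y)
      (intOn_pow x (n+2) (by omega) measurableSet_Iic)
      (tendsto_Gpow tendsto_abs_atBot_atTop n)]
  rw [integral_Ioi_of_hasDerivAt_of_tendsto' (fun y _ => hasDerivAt_Gpow n y)
      ((intOn_pow x (n+2) (by omega) measurableSet_Ici).mono_set Ioi_subset_Ici_self)
      (tendsto_Gpow tendsto_abs_atTop_atTop n)]
  ring

lemma tendsto_int_vpow (x : ℝ) (n : ℕ) :
    Tendsto (fun ε : ℝ => ∫ y in {y : ℝ | ε ≤ |x - y|}, (((y:ℂ) - Complex.I)⁻¹)^(n+2))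
      (𝓝[>] (0:ℝ)) (𝓝 0) := by
  have hcont : Tendsto (fun ε : ℝ =>
      (-(((n:ℂ)+1)⁻¹) * (((((x-ε):ℝ):ℂ) - Complex.I)⁻¹)^(n+1))
        - (-(((n:ℂ)+1)⁻¹) * (((((x+ε):ℝ):ℂ) - Complex.I)⁻¹)^(n+1))) (𝓝 0) (𝓝 0) := by
    have c1 : Continuous fun ε : ℝ =>
        -(((n:ℂ)+1)⁻¹) * (((((x-ε):ℝ):ℂ) - Complex.I)⁻¹)^(n+1) := by
      apply continuous_const.mul
      exact (((Complex.continuous_ofReal.comp (continuous_const.sub continuous_id)).sub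
        continuous_const).inv₀ (fun ε => sub_I_ne (x-ε))).pow (n+1)
    have c2 : Continuous fun ε : ℝ =>
        -(((n:ℂ)+1)⁻¹) * (((((x+ε):ℝ):ℂ) - Complex.I)⁻¹)^(n+1) := by
      apply continuous_const.mul
      exact (((Complex.continuous_ofReal.comp (continuous_const.add continuous_id)).sub
        continuous_const).inv₀ (fun ε => sub_I_ne (x+ε))).pow (n+1)
    have := (c1.sub c2).tendsto 0
    simpa [Pi.sub_def] using this
  apply Tendsto.congr' ?_ (hcont.mono_left nhdsWithin_le_nhds)
  filter_upwards [self_mem_nhdsWithin] with ε (hε : ε ∈ Ioi (0:ℝ))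
  exact (int_vpow_eq x n hε).symm

lemma slit_sub_I (y : ℝ) : ((y:ℂ) - Complex.I) ∈ Complex.slitPlane := by
  rw [Complex.mem_slitPlane_iff]; right; simp

lemma hasDerivAt_logC (y : ℝ) : HasDerivAt (fun t : ℝ => Complex.log ((t:ℂ) - Complex.I))
    (((y:ℂ) - Complex.I)⁻¹) y := by
  have h0 : HasDerivAt (fun z : ℂ => z - Complex.I) 1 ((y:ℂ)) := (hasDerivAt_id _).sub_const _
  have h1 := HasDerivAt.comp ((y:ℂ)) (Complex.hasDerivAt_log (slit_sub_I y)) h0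
  simpa using h1.comp_ofReal

lemma tendsto_inv_ofReal_sub_atTop (x : ℝ) :
    Tendsto (fun y : ℝ => ((y:ℂ) - (x:ℂ))⁻¹) atTop (𝓝 0) := by
  have hr : Tendsto (fun y : ℝ => (y - x)⁻¹) atTop (𝓝 0) :=
    tendsto_inv_atTop_zero.comp (tendsto_atTop_add_const_right _ (-x) tendsto_id)
  have h2 := (Complex.continuous_ofReal.tendsto 0).comp hr
  refine Tendsto.congr (fun y => ?_) (by simpa using h2)
  simp only [Function.comp_apply]
  push_cast; ring

lemma tendsto_inv_ofReal_sub_atBot (x : ℝ) :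
    Tendsto (fun y : ℝ => ((x:ℂ) - (y:ℂ))⁻¹) atBot (𝓝 0) := by
  have h1 : Tendsto (fun y : ℝ => x - y) atBot atTop := by
    apply tendsto_atTop_add_const_left
    exact tendsto_neg_atBot_atTop
  have hr : Tendsto (fun y : ℝ => (x - y)⁻¹) atBot (𝓝 0) :=
    tendsto_inv_atTop_zero.comp h1
  have h2 := (Complex.continuous_ofReal.tendsto 0).comp hr
  refine Tendsto.congr (fun y => ?_) (by simpa using h2)
  simp only [Function.comp_apply]
  push_cast; ring

lemma lim_plus (x : ℝ) :
    Tendsto (fun y : ℝ => ((x:ℂ) - Complex.I)⁻¹ *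
      (Complex.log ((y:ℂ) - Complex.I) - ((Real.log (y - x) : ℝ) : ℂ))) atTop (𝓝 0) := by
  suffices h : Tendsto (fun y : ℝ => Complex.log (((y:ℂ) - Complex.I) / ((y:ℂ) - (x:ℂ))))
      atTop (𝓝 0) by
    have h2 := h.const_mul (((x:ℂ) - Complex.I)⁻¹)
    rw [mul_zero] at h2
    apply h2.congr'
    filter_upwards [eventually_gt_atTop x] with y hy
    have hyx0 : (0:ℝ) < y - x := by linarith
    have hne : ((y:ℂ) - Complex.I) / ((y:ℂ) - (x:ℂ)) ≠ 0 :=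
      div_ne_zero (sub_I_ne y) (sub_ofReal_ne hy.ne')
    have hlog := Complex.log_ofReal_mul hyx0 hne
    have hmul : (((y - x : ℝ)) : ℂ) * (((y:ℂ) - Complex.I) / ((y:ℂ) - (x:ℂ)))
        = (y:ℂ) - Complex.I := by
      push_cast
      rw [mul_comm, div_mul_cancel₀ _ (sub_ofReal_ne hy.ne')]
    rw [hmul] at hlog
    rw [hlog]
    ring
  have h1 : Tendsto (fun y : ℝ => 1 + ((x:ℂ) - Complex.I) * ((y:ℂ) - (x:ℂ))⁻¹) atTop (𝓝 1) := by
    have := ((tendsto_inv_ofReal_sub_atTop x).const_mul ((x:ℂ) - Complex.I)).const_add 1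
    simpa using this
  have hlog1 : ContinuousAt Complex.log 1 := continuousAt_clog (by simp)
  have h3 := (hlog1.tendsto.comp h1)
  rw [Complex.log_one] at h3
  apply h3.congr'
  filter_upwards [eventually_gt_atTop x] with y hy
  have hne := sub_ofReal_ne hy.ne'
  have hid : 1 + ((x:ℂ) - Complex.I) * ((y:ℂ) - (x:ℂ))⁻¹
      = ((y:ℂ) - Complex.I) / ((y:ℂ) - (x:ℂ)) := by
    field_simp
    ring
  simp only [Function.comp_apply, hid]

lemma lim_minus (x : ℝ) :
    Tendsto (fun y : ℝ => ((x:ℂ) - Complex.I)⁻¹ *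
      (Complex.log ((y:ℂ) - Complex.I) - ((Real.log (x - y) : ℝ) : ℂ))) atBot
      (𝓝 (((x:ℂ) - Complex.I)⁻¹ * (-(Real.pi : ℂ) * Complex.I))) := by
  suffices h : Tendsto (fun y : ℝ => Complex.log (((y:ℂ) - Complex.I) / ((x:ℂ) - (y:ℂ))))
      atBot (𝓝 (-(Real.pi : ℂ) * Complex.I)) by
    have h2 := h.const_mul (((x:ℂ) - Complex.I)⁻¹)
    apply h2.congr'
    filter_upwards [eventually_lt_atBot x] with y hy
    have hyx0 : (0:ℝ) < x - y := by linarith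
    have hne : ((y:ℂ) - Complex.I) / ((x:ℂ) - (y:ℂ)) ≠ 0 :=
      div_ne_zero (sub_I_ne y) (sub_ofReal_ne hy.ne')
    have hlog := Complex.log_ofReal_mul hyx0 hne
    have hmul : (((x - y : ℝ)) : ℂ) * (((y:ℂ) - Complex.I) / ((x:ℂ) - (y:ℂ)))
        = (y:ℂ) - Complex.I := by
      push_cast
      rw [mul_comm, div_mul_cancel₀ _ (sub_ofReal_ne hy.ne')]
    rw [hmul] at hlog
    rw [hlog]
    ring
  -- inner tendsto to -1 within lower half plane
  have hw : Tendsto (fun y : ℝ => ((y:ℂ) - Complex.I) / ((x:ℂ) - (y:ℂ))) atBot (𝓝 (-1)) := by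
    have h1 := ((tendsto_inv_ofReal_sub_atBot x).const_mul ((x:ℂ) - Complex.I)).const_add (-1)
    rw [mul_zero, add_zero] at h1
    apply h1.congr'
    filter_upwards [eventually_lt_atBot x] with y hy
    have hne : ((x:ℂ) - (y:ℂ)) ≠ 0 := sub_ofReal_ne hy.ne'
    have hid : -1 + ((x:ℂ) - Complex.I) * ((x:ℂ) - (y:ℂ))⁻¹
        = ((y:ℂ) - Complex.I) / ((x:ℂ) - (y:ℂ)) := by
      field_simp
      ring
    simp only [hid]
  have hmem : ∀ᶠ y : ℝ in atBot,
      (fun y : ℝ => ((y:ℂ) - Complex.I) / ((x:ℂ) - (y:ℂ))) y ∈ {z : ℂ | z.im < 0} := by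
    filter_upwards [eventually_lt_atBot x] with y hy
    have hyx0 : (0:ℝ) < x - y := by linarith
    have hne : ((x:ℂ) - (y:ℂ)) ≠ 0 := sub_ofReal_ne hy.ne'
    have heq : ((y:ℂ) - Complex.I) / ((x:ℂ) - (y:ℂ))
        = ((((x - y : ℝ))⁻¹ : ℝ) : ℂ) * ((y:ℂ) - Complex.I) := by
      push_cast
      field_simp
    simp only [mem_setOf_eq, heq, Complex.mul_im, Complex.ofReal_im, Complex.ofReal_re,
      Complex.sub_im, Complex.ofReal_im, Complex.I_im, Complex.sub_re, Complex.I_re]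
    have hpos : (0:ℝ) < (x-y)⁻¹ := by positivity
    nlinarith
  have hwithin : Tendsto (fun y : ℝ => ((y:ℂ) - Complex.I) / ((x:ℂ) - (y:ℂ))) atBot
      (𝓝[{z : ℂ | z.im < 0}] (-1)) := tendsto_nhdsWithin_iff.mpr ⟨hw, hmem⟩
  have hloglim := Complex.tendsto_log_nhdsWithin_im_neg_of_re_neg_of_im_zero
    (z := (-1:ℂ)) (by simp) (by simp)
  have := hloglim.comp hwithin
  simpa [Function.comp_def] using this

lemma intOn_base (x : ℝ) {ε : ℝ} (hε : 0 < ε) :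
    IntegrableOn (fun y : ℝ => ((y:ℂ) - Complex.I)⁻¹ / ((x:ℂ) - (y:ℂ)))
      {y : ℝ | ε ≤ |x - y|} := by
  have := intOn_main x hε 0 1 le_rfl
  simpa using this

lemma hasDerivAt_Fplus (x : ℝ) {y : ℝ} (hy : x < y) :
    HasDerivAt (fun t : ℝ => ((x:ℂ) - Complex.I)⁻¹ *
      (Complex.log ((t:ℂ) - Complex.I) - ((Real.log (t - x) : ℝ) : ℂ)))
      (((y:ℂ) - Complex.I)⁻¹ / ((x:ℂ) - (y:ℂ))) y := by
  have h0 : HasDerivAt (fun t : ℝ => t - x) 1 y := (hasDerivAt_id _).sub_const _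
  have hlogR : HasDerivAt (fun t : ℝ => Real.log (t - x)) ((y - x)⁻¹) y := by
    simpa [Function.comp_def] using (Real.hasDerivAt_log (sub_ne_zero.mpr hy.ne')).comp y h0
  have h1 := ((hasDerivAt_logC y).sub hlogR.ofReal_comp).const_mul (((x:ℂ) - Complex.I)⁻¹)
  refine h1.congr_deriv ?_
  have h2 := sub_I_ne x
  have h3 := sub_I_ne y
  have h4 : ((y:ℂ) - (x:ℂ)) ≠ 0 := sub_ofReal_ne hy.ne'
  have h5 : ((x:ℂ) - (y:ℂ)) ≠ 0 := sub_ofReal_ne hy.ne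
  push_cast
  field_simp
  ring

lemma hasDerivAt_Fminus (x : ℝ) {y : ℝ} (hy : y < x) :
    HasDerivAt (fun t : ℝ => ((x:ℂ) - Complex.I)⁻¹ *
      (Complex.log ((t:ℂ) - Complex.I) - ((Real.log (x - t) : ℝ) : ℂ)))
      (((y:ℂ) - Complex.I)⁻¹ / ((x:ℂ) - (y:ℂ))) y := by
  have h0 : HasDerivAt (fun t : ℝ => x - t) (-1) y := by
    simpa using (hasDerivAt_id y).const_sub x
  have hlogR : HasDerivAt (fun t : ℝ => Real.log (x - t)) ((x - y)⁻¹ * (-1)) y :=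
    (Real.hasDerivAt_log (sub_ne_zero.mpr hy.ne')).comp y h0
  have h1 := ((hasDerivAt_logC y).sub hlogR.ofReal_comp).const_mul (((x:ℂ) - Complex.I)⁻¹)
  refine h1.congr_deriv ?_
  have h2 := sub_I_ne x
  have h3 := sub_I_ne y
  have h5 : ((x:ℂ) - (y:ℂ)) ≠ 0 := sub_ofReal_ne hy.ne'
  push_cast
  field_simp
  ring

lemma base_eq (x : ℝ) {ε : ℝ} (hε : 0 < ε) :
    ∫ y in {y : ℝ | ε ≤ |x - y|}, ((y:ℂ) - Complex.I)⁻¹ / ((x:ℂ) - (y:ℂ))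
      = ((x:ℂ) - Complex.I)⁻¹ * ((Real.pi : ℂ) * Complex.I
          + Complex.log ((((x - ε) : ℝ) : ℂ) - Complex.I)
          - Complex.log ((((x + ε) : ℝ) : ℂ) - Complex.I)) := by
  have hdisj : Disjoint (Iic (x-ε)) (Ici (x+ε)) := by
    rw [Iic_disjoint_Ici]
    linarith
  have hint := intOn_base x hε
  rw [S_eq] at hint ⊢
  have hintIic : IntegrableOn (fun y : ℝ => ((y:ℂ) - Complex.I)⁻¹ / ((x:ℂ) - (y:ℂ)))
      (Iic (x-ε)) := hint.mono_set subset_union_left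
  have hintIci : IntegrableOn (fun y : ℝ => ((y:ℂ) - Complex.I)⁻¹ / ((x:ℂ) - (y:ℂ)))
      (Ici (x+ε)) := hint.mono_set subset_union_right
  rw [setIntegral_union hdisj measurableSet_Ici hintIic hintIci]
  rw [integral_Ici_eq_integral_Ioi]
  rw [integral_Iic_of_hasDerivAt_of_tendsto'
      (fun y hy => hasDerivAt_Fminus x (lt_of_le_of_lt hy (by linarith)))
      hintIic (lim_minus x)]
  rw [integral_Ioi_of_hasDerivAt_of_tendsto'
      (fun y hy => hasDerivAt_Fplus x (lt_of_lt_of_le (by linarith) hy))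
      (hintIci.mono_set Ioi_subset_Ici_self) (lim_plus x)]
  have e1 : x - (x - ε) = ε := by ring
  have e2 : x + ε - x = ε := by ring
  rw [e1, e2]
  ring

lemma L_base (x : ℝ) :
    Tendsto (fun ε : ℝ => ∫ y in {y : ℝ | ε ≤ |x - y|},
        ((y:ℂ) - Complex.I)⁻¹ / ((x:ℂ) - (y:ℂ))) (𝓝[>] (0:ℝ))
      (𝓝 ((Real.pi : ℂ) * Complex.I * ((x:ℂ) - Complex.I)⁻¹)) := by
  have hin : Tendsto (fun ε : ℝ => ((((x - ε) : ℝ) : ℂ) - Complex.I)) (𝓝 0)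
      (𝓝 ((x:ℂ) - Complex.I)) := by
    apply Continuous.tendsto'
    · exact (Complex.continuous_ofReal.comp (continuous_const.sub continuous_id)).sub
        continuous_const
    · simp
  have hin2 : Tendsto (fun ε : ℝ => ((((x + ε) : ℝ) : ℂ) - Complex.I)) (𝓝 0)
      (𝓝 ((x:ℂ) - Complex.I)) := by
    apply Continuous.tendsto'
    · exact (Complex.continuous_ofReal.comp (continuous_const.add continuous_id)).sub
        continuous_const
    · simp
  have hlog := (continuousAt_clog (slit_sub_I x)).tendsto
  have hφ : Tendsto (fun ε : ℝ => ((x:ℂ) - Complex.I)⁻¹ * ((Real.pi : ℂ) * Complex.I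
      + Complex.log ((((x - ε) : ℝ) : ℂ) - Complex.I)
      - Complex.log ((((x + ε) : ℝ) : ℂ) - Complex.I))) (𝓝 0)
      (𝓝 ((Real.pi : ℂ) * Complex.I * ((x:ℂ) - Complex.I)⁻¹)) := by
    have := (((hlog.comp hin).const_add ((Real.pi : ℂ) * Complex.I)).sub
      (hlog.comp hin2)).const_mul (((x:ℂ) - Complex.I)⁻¹)
    have e : ((x:ℂ) - Complex.I)⁻¹ * ((Real.pi : ℂ) * Complex.I + Complex.log ((x:ℂ) - Complex.I)
        - Complex.log ((x:ℂ) - Complex.I)) = (Real.pi : ℂ) * Complex.I * ((x:ℂ) - Complex.I)⁻¹ := by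
      ring
    rw [e] at this
    exact this
  apply Tendsto.congr' ?_ (hφ.mono_left nhdsWithin_le_nhds)
  filter_upwards [self_mem_nhdsWithin] with ε (hε : ε ∈ Ioi (0:ℝ))
  exact (base_eq x hε).symm

lemma intOn_noplus (x : ℝ) {ε : ℝ} (hε : 0 < ε) (q : ℕ) (hq : 1 ≤ q) :
    IntegrableOn (fun y : ℝ => (((y:ℂ) - Complex.I)⁻¹)^q / ((x:ℂ) - (y:ℂ)))
      {y : ℝ | ε ≤ |x - y|} := by
  have := intOn_main x hε 0 q hq
  simpa using this

lemma L_ind (x : ℝ) (n : ℕ) :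
    Tendsto (fun ε : ℝ => ∫ y in {y : ℝ | ε ≤ |x - y|},
        (((y:ℂ) - Complex.I)⁻¹)^(n+1) / ((x:ℂ) - (y:ℂ))) (𝓝[>] (0:ℝ))
      (𝓝 ((Real.pi : ℂ) * Complex.I * (((x:ℂ) - Complex.I)⁻¹)^(n+1))) := by
  induction n with
  | zero => simpa using L_base x
  | succ n ih =>
    have key : ∀ ε : ℝ, 0 < ε →
        ∫ y in {y : ℝ | ε ≤ |x - y|}, (((y:ℂ) - Complex.I)⁻¹)^(n+2) / ((x:ℂ) - (y:ℂ))
          = ((x:ℂ) - Complex.I)⁻¹ *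
              (∫ y in {y : ℝ | ε ≤ |x - y|}, (((y:ℂ) - Complex.I)⁻¹)^(n+2))
            + ((x:ℂ) - Complex.I)⁻¹ *
              (∫ y in {y : ℝ | ε ≤ |x - y|},
                (((y:ℂ) - Complex.I)⁻¹)^(n+1) / ((x:ℂ) - (y:ℂ))) := by
      intro ε hε
      have hid : EqOn (fun y : ℝ => (((y:ℂ) - Complex.I)⁻¹)^(n+2) / ((x:ℂ) - (y:ℂ)))
          (fun y : ℝ => ((x:ℂ) - Complex.I)⁻¹ * (((y:ℂ) - Complex.I)⁻¹)^(n+2)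
            + ((x:ℂ) - Complex.I)⁻¹ * ((((y:ℂ) - Complex.I)⁻¹)^(n+1) / ((x:ℂ) - (y:ℂ))))
          {y : ℝ | ε ≤ |x - y|} := by
        intro y hy
        have h2 := sub_I_ne x
        have h3 := sub_I_ne y
        have h4 : ((x:ℂ) - (y:ℂ)) ≠ 0 := sub_ofReal_ne (mem_S_ne hε hy)
        simp only
        rw [pow_succ (((y:ℂ) - Complex.I)⁻¹) (n+1)]
        generalize (((y:ℂ) - Complex.I)⁻¹)^(n+1) = w
        field_simp
        ring
      rw [setIntegral_congr_fun (S_meas x ε) hid]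
      rw [integral_add (((intOn_pow x (n+2) (by omega) (S_meas x ε))).const_mul _)
        ((intOn_noplus x hε (n+1) (by omega)).const_mul _)]
      rw [integral_const_mul, integral_const_mul]
    have hlim := ((tendsto_int_vpow x n).const_mul (((x:ℂ) - Complex.I)⁻¹)).add
      (ih.const_mul (((x:ℂ) - Complex.I)⁻¹))
    have hval : ((x:ℂ) - Complex.I)⁻¹ * 0
        + ((x:ℂ) - Complex.I)⁻¹ * ((Real.pi : ℂ) * Complex.I * (((x:ℂ) - Complex.I)⁻¹)^(n+1))
        = (Real.pi : ℂ) * Complex.I * (((x:ℂ) - Complex.I)⁻¹)^(n+2) := by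
      ring
    rw [hval] at hlim
    apply Tendsto.congr' ?_ hlim
    filter_upwards [self_mem_nhdsWithin] with ε (hε : ε ∈ Ioi (0:ℝ))
    exact (key ε hε).symm

lemma KL (x : ℝ) (p : ℕ) : ∀ j : ℕ,
    Tendsto (fun ε : ℝ => ∫ y in {y : ℝ | ε ≤ |x - y|},
        ((y:ℂ) + Complex.I)^p * (((y:ℂ) - Complex.I)⁻¹)^(p+j+2) / ((x:ℂ) - (y:ℂ)))
      (𝓝[>] (0:ℝ))
      (𝓝 ((Real.pi : ℂ) * Complex.I * ((x:ℂ) + Complex.I)^p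
        * (((x:ℂ) - Complex.I)⁻¹)^(p+j+2))) := by
  induction p with
  | zero =>
    intro j
    have := L_ind x (j+1)
    apply Tendsto.congr' ?_ ?_
    · exact fun ε => ∫ y in {y : ℝ | ε ≤ |x - y|},
        (((y:ℂ) - Complex.I)⁻¹)^(j+2) / ((x:ℂ) - (y:ℂ))
    · filter_upwards with ε
      congr 1
      ext y
      simp [pow_succ]
    · simpa [show j+1+1 = j+2 from rfl] using this
  | succ p ih =>
    intro j
    have key : ∀ ε : ℝ, 0 < ε →
        ∫ y in {y : ℝ | ε ≤ |x - y|},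
            ((y:ℂ) + Complex.I)^(p+1) * (((y:ℂ) - Complex.I)⁻¹)^(p+1+j+2) / ((x:ℂ) - (y:ℂ))
          = (∫ y in {y : ℝ | ε ≤ |x - y|},
              ((y:ℂ) + Complex.I)^p * (((y:ℂ) - Complex.I)⁻¹)^(p+j+2) / ((x:ℂ) - (y:ℂ)))
            + (2*Complex.I) * (∫ y in {y : ℝ | ε ≤ |x - y|},
              ((y:ℂ) + Complex.I)^p * (((y:ℂ) - Complex.I)⁻¹)^(p+(j+1)+2) / ((x:ℂ) - (y:ℂ))) := by
      intro ε hε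
      have hid : EqOn
          (fun y : ℝ => ((y:ℂ) + Complex.I)^(p+1) * (((y:ℂ) - Complex.I)⁻¹)^(p+1+j+2)
            / ((x:ℂ) - (y:ℂ)))
          (fun y : ℝ => ((y:ℂ) + Complex.I)^p * (((y:ℂ) - Complex.I)⁻¹)^(p+j+2) / ((x:ℂ) - (y:ℂ))
            + (2*Complex.I) * (((y:ℂ) + Complex.I)^p * (((y:ℂ) - Complex.I)⁻¹)^(p+(j+1)+2)
              / ((x:ℂ) - (y:ℂ))))
          {y : ℝ | ε ≤ |x - y|} := by
        intro y hy
        have h3 := sub_I_ne y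
        have h4 : ((x:ℂ) - (y:ℂ)) ≠ 0 := sub_ofReal_ne (mem_S_ne hε hy)
        simp only
        rw [show p+1+j+2 = (p+j+2)+1 from by omega, show p+(j+1)+2 = (p+j+2)+1 from by omega]
        rw [pow_succ (((y:ℂ) - Complex.I)⁻¹) (p+j+2), pow_succ ((y:ℂ) + Complex.I) p]
        generalize (((y:ℂ) - Complex.I)⁻¹)^(p+j+2) = B
        generalize ((y:ℂ) + Complex.I)^p = A
        field_simp
        ring
      rw [setIntegral_congr_fun (S_meas x ε) hid]
      rw [integral_add (intOn_main x hε p (p+j+2) (by omega))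
        ((intOn_main x hε p (p+(j+1)+2) (by omega)).const_mul _)]
      rw [integral_const_mul]
    have hlim := (ih j).add ((ih (j+1)).const_mul (2*Complex.I))
    have hval : (Real.pi : ℂ) * Complex.I * ((x:ℂ) + Complex.I)^p
          * (((x:ℂ) - Complex.I)⁻¹)^(p+j+2)
        + (2*Complex.I) * ((Real.pi : ℂ) * Complex.I * ((x:ℂ) + Complex.I)^p
          * (((x:ℂ) - Complex.I)⁻¹)^(p+(j+1)+2))
        = (Real.pi : ℂ) * Complex.I * ((x:ℂ) + Complex.I)^(p+1)
          * (((x:ℂ) - Complex.I)⁻¹)^(p+1+j+2) := by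
      have h2 := sub_I_ne x
      rw [show p+1+j+2 = (p+j+2)+1 from by omega, show p+(j+1)+2 = (p+j+2)+1 from by omega]
      rw [pow_succ (((x:ℂ) - Complex.I)⁻¹) (p+j+2), pow_succ ((x:ℂ) + Complex.I) p]
      generalize (((x:ℂ) - Complex.I)⁻¹)^(p+j+2) = B
      generalize ((x:ℂ) + Complex.I)^p = A
      field_simp
      ring
    rw [hval] at hlim
    apply Tendsto.congr' ?_ hlim
    filter_upwards [self_mem_nhdsWithin] with ε (hε : ε ∈ Ioi (0:ℝ))
    exact (key ε hε).symm

lemma sq_one_pos (y : ℝ) : (0:ℝ) < y^2 + 1 := by positivity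

lemma ofReal_sq_add_one (y : ℝ) :
    (((y^2 + 1 : ℝ)) : ℂ) = ((y:ℂ) + Complex.I) * ((y:ℂ) - Complex.I) := by
  push_cast
  linear_combination Complex.I_sq

lemma uFun_pos (p : ℕ) (y : ℝ) :
    uFun (2*((p:ℤ)+1)) y = (((y:ℂ) + Complex.I) * (((y:ℂ) - Complex.I)⁻¹))^(p+1) := by
  unfold uFun
  have he : (((2*((p:ℤ)+1) : ℤ) : ℝ)) / 2 = ((p+1 : ℕ) : ℝ) := by push_cast; ring
  rw [he, Real.rpow_natCast]
  have hz : ((y:ℂ) + Complex.I) ^ (2*((p:ℤ)+1)) = ((y:ℂ) + Complex.I) ^ (2*(p+1) : ℕ) := by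
    rw [show (2*((p:ℤ)+1)) = ((2*(p+1) : ℕ) : ℤ) by push_cast; ring, zpow_natCast]
  rw [hz, Complex.ofReal_pow, ofReal_sq_add_one]
  rw [div_eq_iff (pow_ne_zero _ (mul_ne_zero (add_I_ne y) (sub_I_ne y)))]
  rw [← mul_pow, pow_mul]
  congr 1
  have h3 := sub_I_ne y
  have h4 := add_I_ne y
  field_simp

lemma uFun_neg (p : ℕ) (y : ℝ) :
    uFun (-(2*((p:ℤ)+1))) y = (((y:ℂ) - Complex.I) * (((y:ℂ) + Complex.I)⁻¹))^(p+1) := by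
  unfold uFun
  have he : (((-(2*((p:ℤ)+1)) : ℤ) : ℝ)) / 2 = -((p+1 : ℕ) : ℝ) := by push_cast; ring
  rw [he, Real.rpow_neg (sq_one_pos y).le, Real.rpow_natCast]
  have hz : ((y:ℂ) + Complex.I) ^ (-(2*((p:ℤ)+1)))
      = ((((y:ℂ) + Complex.I) ^ (2*(p+1) : ℕ))⁻¹) := by
    rw [show (-(2*((p:ℤ)+1))) = -((2*(p+1) : ℕ) : ℤ) by push_cast; ring, zpow_neg, zpow_natCast]
  rw [hz, Complex.ofReal_inv, Complex.ofReal_pow, ofReal_sq_add_one]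
  rw [div_eq_mul_inv, inv_inv, pow_mul, ← inv_pow, ← mul_pow]
  congr 1
  have h3 := sub_I_ne y
  have h4 := add_I_ne y
  field_simp

lemma hasDerivAt_uFun_pos (p : ℕ) (y : ℝ) :
    HasDerivAt (uFun (2*((p:ℤ)+1)))
      ((((p:ℂ)+1) * (((y:ℂ) + Complex.I) * (((y:ℂ) - Complex.I)⁻¹))^p)
        * (-2*Complex.I * ((((y:ℂ) - Complex.I))⁻¹)^2)) y := by
  have hwdiv : HasDerivAt (fun z : ℂ => (z + Complex.I) / (z - Complex.I))
      ((1 * ((y:ℂ) - Complex.I) - ((y:ℂ) + Complex.I) * 1) / ((y:ℂ) - Complex.I)^2)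
      ((y:ℂ)) :=
    ((hasDerivAt_id _).add_const _).div ((hasDerivAt_id _).sub_const _) (sub_I_ne y)
  have hpow := (hwdiv.pow (p+1)).comp_ofReal
  have heq : uFun (2*((p:ℤ)+1))
      = fun t : ℝ => (((t:ℂ) + Complex.I) / ((t:ℂ) - Complex.I))^(p+1) := by
    funext t
    rw [uFun_pos, div_eq_mul_inv]
  rw [heq]
  refine hpow.congr_deriv ?_
  simp only [Nat.add_sub_cancel]
  have h3 := sub_I_ne y
  field_simp
  push_cast
  ring

lemma deriv_uFun_pos (p : ℕ) (y : ℝ) :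
    deriv (uFun (2*((p:ℤ)+1))) y
      = (((p:ℂ)+1) * (((y:ℂ) + Complex.I) * (((y:ℂ) - Complex.I)⁻¹))^p)
        * (-2*Complex.I * ((((y:ℂ) - Complex.I))⁻¹)^2) :=
  (hasDerivAt_uFun_pos p y).deriv

lemma hasDerivAt_uFun_neg (p : ℕ) (y : ℝ) :
    HasDerivAt (uFun (-(2*((p:ℤ)+1))))
      ((starRingEnd ℂ) ((((p:ℂ)+1) * (((y:ℂ) + Complex.I) * (((y:ℂ) - Complex.I)⁻¹))^p)
        * (-2*Complex.I * ((((y:ℂ) - Complex.I))⁻¹)^2))) y := by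
  have h := (hasDerivAt_uFun_pos p y).star
  have heq : (fun t : ℝ => star (uFun (2*((p:ℤ)+1)) t)) = uFun (-(2*((p:ℤ)+1))) := by
    funext t
    rw [uFun_neg, uFun_pos]
    simp [map_pow, map_mul, map_inv₀, Complex.conj_ofReal, sub_eq_add_neg]
  rw [heq] at h
  exact h

lemma deriv_uFun_neg (p : ℕ) (y : ℝ) :
    deriv (uFun (-(2*((p:ℤ)+1)))) y = (starRingEnd ℂ) (deriv (uFun (2*((p:ℤ)+1))) y) := by
  rw [deriv_uFun_pos]
  exact (hasDerivAt_uFun_neg p y).deriv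

lemma main_pos (x : ℝ) (p : ℕ) :
    Tendsto (fun ε : ℝ => (1 / (Real.pi : ℂ)) *
        ∫ y in {y : ℝ | ε ≤ |x - y|}, deriv (uFun (2*((p:ℤ)+1))) y / ((x:ℂ) - (y:ℂ)))
      (𝓝[>] (0:ℝ))
      (𝓝 (2*((p:ℂ)+1) * ((x:ℂ) + Complex.I)^p * (((x:ℂ) - Complex.I)⁻¹)^(p+2))) := by
  have hπ : (Real.pi : ℂ) ≠ 0 := Complex.ofReal_ne_zero.mpr Real.pi_ne_zero
  have hKL := (KL x p 0).const_mul ((1 / (Real.pi : ℂ)) * (-2*Complex.I*((p:ℂ)+1)))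
  have hs : (1 / (Real.pi : ℂ)) * (-2*Complex.I*((p:ℂ)+1)) * ((Real.pi:ℂ) * Complex.I)
      = 2*((p:ℂ)+1) := by
    have h1 : (1/(Real.pi:ℂ)) * (Real.pi:ℂ) = 1 := by field_simp
    calc (1 / (Real.pi : ℂ)) * (-2*Complex.I*((p:ℂ)+1)) * ((Real.pi:ℂ) * Complex.I)
        = ((1/(Real.pi:ℂ)) * (Real.pi:ℂ)) * (-2*(Complex.I*Complex.I)*((p:ℂ)+1)) := by ring
      _ = 2*((p:ℂ)+1) := by rw [h1, Complex.I_mul_I]; ring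
  have hval : (1 / (Real.pi : ℂ)) * (-2*Complex.I*((p:ℂ)+1))
      * ((Real.pi : ℂ) * Complex.I * ((x:ℂ) + Complex.I)^p
        * (((x:ℂ) - Complex.I)⁻¹)^(p+0+2))
      = 2*((p:ℂ)+1) * ((x:ℂ) + Complex.I)^p * (((x:ℂ) - Complex.I)⁻¹)^(p+2) := by
    calc (1 / (Real.pi : ℂ)) * (-2*Complex.I*((p:ℂ)+1))
          * ((Real.pi : ℂ) * Complex.I * ((x:ℂ) + Complex.I)^p
            * (((x:ℂ) - Complex.I)⁻¹)^(p+0+2))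
        = ((1 / (Real.pi : ℂ)) * (-2*Complex.I*((p:ℂ)+1)) * ((Real.pi:ℂ) * Complex.I))
          * (((x:ℂ) + Complex.I)^p * (((x:ℂ) - Complex.I)⁻¹)^(p+2)) := by ring
      _ = 2*((p:ℂ)+1) * ((x:ℂ) + Complex.I)^p * (((x:ℂ) - Complex.I)⁻¹)^(p+2) := by
          rw [hs]; ring
  rw [hval] at hKL
  apply Tendsto.congr' ?_ hKL
  filter_upwards [self_mem_nhdsWithin] with ε (hε : ε ∈ Ioi (0:ℝ))
  have hid : EqOn
      (fun y : ℝ => (-2*Complex.I*((p:ℂ)+1)) *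
        (((y:ℂ) + Complex.I)^p * (((y:ℂ) - Complex.I)⁻¹)^(p+0+2) / ((x:ℂ) - (y:ℂ))))
      (fun y : ℝ => deriv (uFun (2*((p:ℤ)+1))) y / ((x:ℂ) - (y:ℂ)))
      {y : ℝ | ε ≤ |x - y|} := by
    intro y _
    simp only [deriv_uFun_pos]
    rw [mul_pow]
    ring
  calc (1 / (Real.pi : ℂ)) * (-2*Complex.I*((p:ℂ)+1))
        * ∫ y in {y : ℝ | ε ≤ |x - y|},
            ((y:ℂ) + Complex.I)^p * (((y:ℂ) - Complex.I)⁻¹)^(p+0+2) / ((x:ℂ) - (y:ℂ))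
      = (1 / (Real.pi : ℂ)) * ∫ y in {y : ℝ | ε ≤ |x - y|},
          (-2*Complex.I*((p:ℂ)+1)) *
            (((y:ℂ) + Complex.I)^p * (((y:ℂ) - Complex.I)⁻¹)^(p+0+2) / ((x:ℂ) - (y:ℂ))) := by
        rw [integral_const_mul, mul_assoc]
    _ = (1 / (Real.pi : ℂ)) * ∫ y in {y : ℝ | ε ≤ |x - y|},
          deriv (uFun (2*((p:ℤ)+1))) y / ((x:ℂ) - (y:ℂ)) := by
        rw [setIntegral_congr_fun (S_meas x ε) hid]

-- final forms
lemma main_pos_final (x : ℝ) (p : ℕ) :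
    Tendsto (fun ε : ℝ => (1 / (Real.pi : ℂ)) *
        ∫ y in {y : ℝ | ε ≤ |x - y|}, deriv (uFun (2*((p:ℤ)+1))) y / ((x : ℂ) - (y : ℂ)))
      (𝓝[>] (0:ℝ))
      (𝓝 ((((2*((p:ℤ)+1)).natAbs : ℂ) * ((x : ℂ) + Complex.I) ^ (2*((p:ℤ)+1))
        / ((((x ^ 2 + 1 : ℝ) ^ (((2*((p:ℤ)+1) : ℤ) : ℝ) / 2 + 1) : ℝ)) : ℂ)))) := by
  have h := main_pos x p
  have hval : (((2*((p:ℤ)+1)).natAbs : ℂ) * ((x : ℂ) + Complex.I) ^ (2*((p:ℤ)+1))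
        / ((((x ^ 2 + 1 : ℝ) ^ (((2*((p:ℤ)+1) : ℤ) : ℝ) / 2 + 1) : ℝ)) : ℂ))
      = 2*((p:ℂ)+1) * ((x:ℂ) + Complex.I)^p * (((x:ℂ) - Complex.I)⁻¹)^(p+2) := by
    have hna : ((2*((p:ℤ)+1)).natAbs : ℂ) = 2*((p:ℂ)+1) := by
      have : (2*((p:ℤ)+1)).natAbs = 2*(p+1) := by omega
      rw [this]; push_cast; ring
    have hz : ((x:ℂ) + Complex.I) ^ (2*((p:ℤ)+1)) = ((x:ℂ) + Complex.I) ^ (2*(p+1) : ℕ) := by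
      rw [show (2*((p:ℤ)+1)) = ((2*(p+1) : ℕ) : ℤ) by push_cast; ring, zpow_natCast]
    have he : ((2*((p:ℤ)+1) : ℤ) : ℝ) / 2 + 1 = ((p+2 : ℕ) : ℝ) := by push_cast; ring
    rw [hna, hz, he, Real.rpow_natCast, Complex.ofReal_pow, ofReal_sq_add_one]
    have h3 := sub_I_ne x
    have h4 := add_I_ne x
    rw [mul_pow, inv_pow]
    field_simp
    ring
  rw [hval]
  exact h

lemma main_zero (x : ℝ) :
    Tendsto (fun ε : ℝ => (1 / (Real.pi : ℂ)) *
        ∫ y in {y : ℝ | ε ≤ |x - y|}, deriv (uFun 0) y / ((x : ℂ) - (y : ℂ)))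
      (𝓝[>] (0:ℝ))
      (𝓝 ((((0:ℤ).natAbs : ℂ) * ((x : ℂ) + Complex.I) ^ (0:ℤ)
        / ((((x ^ 2 + 1 : ℝ) ^ (((0:ℤ) : ℝ) / 2 + 1) : ℝ)) : ℂ)))) := by
  have hu : uFun 0 = fun _ : ℝ => (1:ℂ) := by
    funext y
    unfold uFun
    norm_num
  have hzero : (fun ε : ℝ => (1 / (Real.pi : ℂ)) *
      ∫ y in {y : ℝ | ε ≤ |x - y|}, deriv (uFun 0) y / ((x : ℂ) - (y : ℂ)))
      = fun _ : ℝ => 0 := by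
    funext ε
    rw [hu]
    simp [deriv_const]
  rw [hzero]
  have : (((0:ℤ).natAbs : ℂ) * ((x : ℂ) + Complex.I) ^ (0:ℤ)
      / ((((x ^ 2 + 1 : ℝ) ^ (((0:ℤ) : ℝ) / 2 + 1) : ℝ)) : ℂ)) = 0 := by
    simp
  rw [this]
  exact tendsto_const_nhds

lemma main_neg_final (x : ℝ) (p : ℕ) :
    Tendsto (fun ε : ℝ => (1 / (Real.pi : ℂ)) *
        ∫ y in {y : ℝ | ε ≤ |x - y|}, deriv (uFun (-(2*((p:ℤ)+1)))) y / ((x : ℂ) - (y : ℂ)))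
      (𝓝[>] (0:ℝ))
      (𝓝 ((((-(2*((p:ℤ)+1))).natAbs : ℂ) * ((x : ℂ) + Complex.I) ^ (-(2*((p:ℤ)+1)))
        / ((((x ^ 2 + 1 : ℝ) ^ (((-(2*((p:ℤ)+1)) : ℤ) : ℝ) / 2 + 1) : ℝ)) : ℂ)))) := by
  have h := main_pos x p
  have hconj := (Complex.continuous_conj.tendsto _).comp h
  have heq : (fun ε : ℝ => (starRingEnd ℂ) ((1 / (Real.pi : ℂ)) *
      ∫ y in {y : ℝ | ε ≤ |x - y|}, deriv (uFun (2*((p:ℤ)+1))) y / ((x:ℂ) - (y:ℂ))))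
      = fun ε : ℝ => (1 / (Real.pi : ℂ)) *
        ∫ y in {y : ℝ | ε ≤ |x - y|}, deriv (uFun (-(2*((p:ℤ)+1)))) y / ((x:ℂ) - (y:ℂ)) := by
    funext ε
    rw [map_mul]
    congr 1
    · simp [map_div₀, Complex.conj_ofReal]
    · rw [← integral_conj]
      congr 1
      funext y
      rw [map_div₀, deriv_uFun_neg]
      congr 1
      rw [map_sub, Complex.conj_ofReal, Complex.conj_ofReal]
  have h2 : Tendsto (fun ε : ℝ => (1 / (Real.pi : ℂ)) *
      ∫ y in {y : ℝ | ε ≤ |x - y|}, deriv (uFun (-(2*((p:ℤ)+1)))) y / ((x:ℂ) - (y:ℂ)))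
      (𝓝[>] (0:ℝ))
      (𝓝 ((starRingEnd ℂ) (2*((p:ℂ)+1) * ((x:ℂ) + Complex.I)^p
        * (((x:ℂ) - Complex.I)⁻¹)^(p+2)))) := by
    rw [← heq]
    exact hconj
  have hval : (starRingEnd ℂ) (2*((p:ℂ)+1) * ((x:ℂ) + Complex.I)^p
        * (((x:ℂ) - Complex.I)⁻¹)^(p+2))
      = (((-(2*((p:ℤ)+1))).natAbs : ℂ) * ((x : ℂ) + Complex.I) ^ (-(2*((p:ℤ)+1)))
        / ((((x ^ 2 + 1 : ℝ) ^ (((-(2*((p:ℤ)+1)) : ℤ) : ℝ) / 2 + 1) : ℝ)) : ℂ)) := by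
    have hna : (((-(2*((p:ℤ)+1))).natAbs : ℂ)) = 2*((p:ℂ)+1) := by
      have : ((-(2*((p:ℤ)+1))).natAbs) = 2*(p+1) := by omega
      rw [this]; push_cast; ring
    have hz : ((x:ℂ) + Complex.I) ^ (-(2*((p:ℤ)+1)))
        = (((x:ℂ) + Complex.I) ^ (2*(p+1) : ℕ))⁻¹ := by
      rw [show (-(2*((p:ℤ)+1))) = -((2*(p+1) : ℕ) : ℤ) by push_cast; ring, zpow_neg, zpow_natCast]
    have he : ((-(2*((p:ℤ)+1)) : ℤ) : ℝ) / 2 + 1 = -((p : ℕ) : ℝ) := by push_cast; ring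
    rw [hna, hz, he, Real.rpow_neg (sq_one_pos x).le, Real.rpow_natCast,
      Complex.ofReal_inv, Complex.ofReal_pow, ofReal_sq_add_one]
    simp only [map_mul, map_pow, map_inv₀, map_sub, map_add, Complex.conj_ofReal,
      Complex.conj_I, map_natCast, map_ofNat, map_one]
    have h3 := sub_I_ne x
    have h4 := add_I_ne x
    push_cast
    rw [mul_pow, inv_pow]
    field_simp
    ring
  rw [hval] at h2
  exact h2

/-- For `k` even and `x ∈ ℝ`, the principal value `(1/π)·PV∫ u_k'(y)/(x−y) dy` exists and equals
`|k|·(x+i)^k/(x²+1)^{k/2+1}`. -/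
theorem halfLaplacian_uFun_even (k : ℤ) (hk : Even k) (x : ℝ) :
    Tendsto (fun ε : ℝ => (1 / (Real.pi : ℂ)) *
        ∫ y in {y : ℝ | ε ≤ |x - y|}, deriv (uFun k) y / ((x : ℂ) - (y : ℂ)))
      (nhdsWithin 0 (Set.Ioi 0))
      (nhds ((k.natAbs : ℂ) * ((x : ℂ) + Complex.I) ^ k
        / ((((x ^ 2 + 1 : ℝ) ^ ((k : ℝ) / 2 + 1) : ℝ)) : ℂ))) := by
  obtain ⟨r, rfl⟩ := hk
  rcases lt_trichotomy r 0 with hr | hr | hr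
  · obtain ⟨p, hp⟩ : ∃ p : ℕ, r = -((p:ℤ)+1) := ⟨(-r-1).toNat, by omega⟩
    have hk2 : r + r = -(2*((p:ℤ)+1)) := by omega
    rw [hk2]
    exact main_neg_final x p
  · rw [hr]
    have hk2 : (0:ℤ) + 0 = 0 := by norm_num
    rw [hk2]
    exact main_zero x
  · obtain ⟨p, hp⟩ : ∃ p : ℕ, r = (p:ℤ)+1 := ⟨(r-1).toNat, by omega⟩
    have hk2 : r + r = 2*((p:ℤ)+1) := by omega
    rw [hk2]
    exact main_pos_final x p
end

section
/- Let k be an odd positive integer, s ∈ (0, π), x = cot(s), and let u : ℝ → ℝ be u(y) = sin(k·(π/2 − arctan y)). Then the principal value (1/π)·PV∫ u'(y)/(x−y) dy exists and equals −2/(π(k+2)) − (2k/π)·cos(ks)·( cos(s) + sin²(s)·ln(cot(s/2)) ) − (8k/π)·∑_{n=0}^{(k−1)/2} cos((k−1−2n)s)/((2n−1)(2n+1)(2n+3)). -/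
open Filter MeasureTheory Finset

namespace PVaux

/-- `sin(2mt) = sin t · 2∑_{j<m} cos((2j+1)t)` -/
lemma sin_two_nat_mul (m : ℕ) (t : ℝ) :
    Real.sin (2 * m * t) = Real.sin t * (2 * ∑ j ∈ Finset.range m, Real.cos ((2 * j + 1) * t)) := by
  induction m with
  | zero => simp
  | succ m ih =>
    rw [Finset.sum_range_succ]
    have h1 : (2 * ((m : ℝ) + 1) * t) = 2 * m * t + 2 * t := by ring
    have h2 : ((2 * (m : ℝ) + 1) * t) = 2 * m * t + t := by ring
    push_cast
    rw [h1, h2, Real.sin_add, Real.cos_add, Real.sin_two_mul, Real.cos_two_mul]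
    linear_combination ih + 2 * Real.sin (2 * (m:ℝ) * t) * Real.sin_sq_add_cos_sq t

/-- `cos(2mt) = 1 − sin t · 2∑_{j<m} sin((2j+1)t)` -/
lemma cos_two_nat_mul (m : ℕ) (t : ℝ) :
    Real.cos (2 * m * t) = 1 - Real.sin t * (2 * ∑ j ∈ Finset.range m, Real.sin ((2 * j + 1) * t)) := by
  induction m with
  | zero => simp
  | succ m ih =>
    rw [Finset.sum_range_succ]
    have h1 : (2 * ((m : ℝ) + 1) * t) = 2 * m * t + 2 * t := by ring
    have h2 : ((2 * (m : ℝ) + 1) * t) = 2 * m * t + t := by ring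
    push_cast
    rw [h1, h2, Real.cos_add, Real.sin_add, Real.sin_two_mul, Real.cos_two_mul]
    linear_combination ih + 2 * Real.cos (2 * (m:ℝ) * t) * Real.sin_sq_add_cos_sq t

noncomputable def SS (m : ℕ) (t : ℝ) : ℝ :=
  2 * ∑ j ∈ Finset.range m, Real.sin ((2 * j + 1) * t) / (2 * j + 1)

noncomputable def CC (m : ℕ) (t : ℝ) : ℝ :=
  2 * ∑ j ∈ Finset.range m, Real.cos ((2 * j + 1) * t) / (2 * j + 1)

lemma two_j_one_pos (j : ℕ) : (0 : ℝ) < 2 * j + 1 := by positivity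

lemma hasDerivAt_SS (m : ℕ) (t : ℝ) :
    HasDerivAt (SS m) (2 * ∑ j ∈ Finset.range m, Real.cos ((2 * j + 1) * t)) t := by
  have h : ∀ j ∈ Finset.range m, HasDerivAt (fun t => Real.sin ((2 * j + 1) * t) / (2 * j + 1))
      (Real.cos ((2 * j + 1) * t)) t := by
    intro j _
    have h1 : HasDerivAt (fun t : ℝ => (2 * (j : ℝ) + 1) * t) (2 * j + 1) t := by
      simpa using (hasDerivAt_id t).const_mul (2 * (j : ℝ) + 1)
    have h2 := (Real.hasDerivAt_sin ((2 * j + 1) * t)).comp t h1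
    have h3 := h2.div_const (2 * (j : ℝ) + 1)
    have hne : (2 * (j : ℝ) + 1) ≠ 0 := (two_j_one_pos j).ne'
    refine h3.congr_deriv (Eq.symm ?_)
    field_simp
  have := HasDerivAt.fun_sum h
  exact this.const_mul 2

lemma hasDerivAt_CC (m : ℕ) (t : ℝ) :
    HasDerivAt (CC m) (-(2 * ∑ j ∈ Finset.range m, Real.sin ((2 * j + 1) * t))) t := by
  have h : ∀ j ∈ Finset.range m, HasDerivAt (fun t => Real.cos ((2 * j + 1) * t) / (2 * j + 1))
      (-Real.sin ((2 * j + 1) * t)) t := by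
    intro j _
    have h1 : HasDerivAt (fun t : ℝ => (2 * (j : ℝ) + 1) * t) (2 * j + 1) t := by
      simpa using (hasDerivAt_id t).const_mul (2 * (j : ℝ) + 1)
    have h2 := (Real.hasDerivAt_cos ((2 * j + 1) * t)).comp t h1
    have h3 := h2.div_const (2 * (j : ℝ) + 1)
    have hne : (2 * (j : ℝ) + 1) ≠ 0 := (two_j_one_pos j).ne'
    refine h3.congr_deriv (Eq.symm ?_)
    field_simp
  have := (HasDerivAt.fun_sum h).const_mul (2 : ℝ)
  refine this.congr_deriv (Eq.symm ?_)
  rw [Finset.sum_neg_distrib]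
  ring


lemma pw (θ s : ℝ) : Real.sin s ^ 2 * Real.cos θ
    = Real.cos θ / 2 - Real.cos (θ + 2 * s) / 4 - Real.cos (θ - 2 * s) / 4 := by
  rw [Real.cos_add, Real.cos_sub, Real.cos_two_mul]
  linear_combination Real.cos θ * Real.sin_sq_add_cos_sq s

lemma two_nat_sub_one_ne (M : ℕ) : (2 * (M:ℝ) - 1) ≠ 0 := by
  rcases Nat.eq_zero_or_pos M with h | h
  · subst h; norm_num
  · have : (1:ℝ) ≤ (M:ℝ) := by exact_mod_cast h
    nlinarith

lemma tele (m : ℕ) (s : ℝ) (M : ℕ) :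
    Real.sin s ^ 2 * ∑ j ∈ Finset.range M, Real.cos ((2 * (m:ℝ) - 2 * j) * s) / (2 * j + 1)
    = -2 * ∑ j ∈ Finset.range M,
          Real.cos ((2 * (m:ℝ) - 2 * j) * s) / ((2 * (j:ℝ) - 1) * (2 * (j:ℝ) + 1) * (2 * (j:ℝ) + 3))
      - Real.cos ((2 * (m:ℝ) + 2) * s) / 4 - Real.cos (2 * (m:ℝ) * s) / 4
      + Real.cos ((2 * (m:ℝ) - 2 * M + 2) * s) / (2 * (M:ℝ) + 1) / 4
      - Real.cos ((2 * (m:ℝ) - 2 * M) * s) / (2 * (M:ℝ) - 1) / 4 := by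
  induction M with
  | zero =>
    simp
    ring
  | succ M ih =>
    rw [Finset.sum_range_succ, Finset.sum_range_succ]
    push_cast
    have a1 : (2 * (m:ℝ) - 2 * ((M:ℝ) + 1) + 2) * s = (2 * (m:ℝ) - 2 * M) * s := by ring
    have a2 : (2 * (m:ℝ) - 2 * ((M:ℝ) + 1)) * s = (2 * (m:ℝ) - 2 * M) * s - 2 * s := by ring
    rw [a1, a2]
    have hpw := pw ((2 * (m:ℝ) - 2 * M) * s) s
    have a3 : (2 * (m:ℝ) - 2 * M) * s + 2 * s = (2 * (m:ℝ) - 2 * M + 2) * s := by ring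
    rw [a3] at hpw
    have h1 : (2 * (M:ℝ) + 1) ≠ 0 := by positivity
    have h2 : (2 * (M:ℝ) + 3) ≠ 0 := by positivity
    have h3 : (2 * (M:ℝ) - 1) ≠ 0 := two_nat_sub_one_ne M
    have sc : (1:ℝ) / 2 / (2 * (M:ℝ) + 1) - 1 / 4 / (2 * (M:ℝ) + 3) - 1 / 4 / (2 * (M:ℝ) - 1)
        = -2 / ((2 * (M:ℝ) - 1) * (2 * (M:ℝ) + 1) * (2 * (M:ℝ) + 3)) := by
      field_simp
      ring
    have expand : Real.sin s ^ 2 * (Real.cos ((2 * (m:ℝ) - 2 * M) * s) / (2 * (M:ℝ) + 1))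
        = (Real.cos ((2 * (m:ℝ) - 2 * M) * s) / 2 - Real.cos ((2 * (m:ℝ) - 2 * M + 2) * s) / 4
            - Real.cos ((2 * (m:ℝ) - 2 * M) * s - 2 * s) / 4) * (1 / (2 * (M:ℝ) + 1)) := by
      rw [← hpw]; ring
    have scmul : Real.cos ((2 * (m:ℝ) - 2 * M) * s) / 2 * (1 / (2 * (M:ℝ) + 1))
          - Real.cos ((2 * (m:ℝ) - 2 * M) * s) / 4 / (2 * (M:ℝ) + 3)
          - Real.cos ((2 * (m:ℝ) - 2 * M) * s) / 4 / (2 * (M:ℝ) - 1)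
        = -2 * Real.cos ((2 * (m:ℝ) - 2 * M) * s)
            / ((2 * (M:ℝ) - 1) * (2 * (M:ℝ) + 1) * (2 * (M:ℝ) + 3)) := by
      have := congrArg (fun z => Real.cos ((2 * (m:ℝ) - 2 * M) * s) * z) sc
      calc Real.cos ((2 * (m:ℝ) - 2 * M) * s) / 2 * (1 / (2 * (M:ℝ) + 1))
            - Real.cos ((2 * (m:ℝ) - 2 * M) * s) / 4 / (2 * (M:ℝ) + 3)
            - Real.cos ((2 * (m:ℝ) - 2 * M) * s) / 4 / (2 * (M:ℝ) - 1)
          = Real.cos ((2 * (m:ℝ) - 2 * M) * s)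
              * ((1:ℝ) / 2 / (2 * (M:ℝ) + 1) - 1 / 4 / (2 * (M:ℝ) + 3)
                 - 1 / 4 / (2 * (M:ℝ) - 1)) := by ring
        _ = Real.cos ((2 * (m:ℝ) - 2 * M) * s)
              * (-2 / ((2 * (M:ℝ) - 1) * (2 * (M:ℝ) + 1) * (2 * (M:ℝ) + 3))) := by rw [sc]
        _ = -2 * Real.cos ((2 * (m:ℝ) - 2 * M) * s)
              / ((2 * (M:ℝ) - 1) * (2 * (M:ℝ) + 1) * (2 * (M:ℝ) + 3)) := by ring
    linear_combination ih + expand + scmul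

lemma comb (m M : ℕ) (s : ℝ) :
    Real.cos ((2*(m:ℝ)+1)*s) * CC M s + Real.sin ((2*(m:ℝ)+1)*s) * SS M s
    = 2 * ∑ j ∈ Finset.range M, Real.cos ((2*(m:ℝ) - 2*j) * s) / (2*(j:ℝ)+1) := by
  unfold CC SS
  trans (2 * ∑ j ∈ Finset.range M,
      (Real.cos ((2*(m:ℝ)+1)*s) * (Real.cos ((2*j+1)*s)/(2*j+1))
        + Real.sin ((2*(m:ℝ)+1)*s) * (Real.sin ((2*j+1)*s)/(2*j+1))))
  · rw [Finset.sum_add_distrib, ← Finset.mul_sum, ← Finset.mul_sum]; ring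
  · congr 1
    refine Finset.sum_congr rfl fun j _ => ?_
    rw [show (2*(m:ℝ) - 2*j)*s = (2*(m:ℝ)+1)*s - (2*(j:ℝ)+1)*s by ring, Real.cos_sub]
    ring

lemma key_identity (m : ℕ) (s : ℝ) :
    (2*(m:ℝ)+1) * Real.sin s ^ 2 * (Real.cos ((2*(m:ℝ)+1)*s) * (CC (m+1) s + CC m s)
       + Real.sin ((2*(m:ℝ)+1)*s) * (SS (m+1) s + SS m s))
    = -2/(2*(m:ℝ)+3) - 2*(2*(m:ℝ)+1) * Real.cos ((2*(m:ℝ)+1)*s) * Real.cos s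
      - 8*(2*(m:ℝ)+1) * ∑ n ∈ Finset.range (m+1),
          Real.cos ((2*(m:ℝ) - 2*n) * s) / ((2*(n:ℝ)-1)*(2*(n:ℝ)+1)*(2*(n:ℝ)+3)) := by
  have c1 := comb m (m+1) s
  have c2 := comb m m s
  have t1 := tele m s (m+1)
  push_cast at t1
  rw [show (2*(m:ℝ)-2*((m:ℝ)+1)+2)*s = 0 by ring,
      show (2*(m:ℝ)-2*((m:ℝ)+1))*s = -(2*s) by ring, Real.cos_zero, Real.cos_neg] at t1
  have t2 := tele m s m
  rw [show (2*(m:ℝ)-2*(m:ℝ)+2)*s = 2*s by ring,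
      show (2*(m:ℝ)-2*(m:ℝ))*s = 0 by ring, Real.cos_zero] at t2
  have hstep := Finset.sum_range_succ
    (fun n : ℕ => Real.cos ((2*(m:ℝ) - 2*n) * s) / ((2*(n:ℝ)-1)*(2*(n:ℝ)+1)*(2*(n:ℝ)+3))) m
  rw [show (2*(m:ℝ)-2*(m:ℝ))*s = 0 by ring, Real.cos_zero] at hstep
  have prodcos : 2 * Real.cos ((2*(m:ℝ)+1)*s) * Real.cos s
      = Real.cos ((2*(m:ℝ)+2)*s) + Real.cos (2*(m:ℝ)*s) := by
    rw [show (2*(m:ℝ)+2)*s = (2*(m:ℝ)+1)*s + s by ring,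
        show (2*(m:ℝ))*s = (2*(m:ℝ)+1)*s - s by ring, Real.cos_add, Real.cos_sub]
    ring
  have h1 : (2 * (m:ℝ) + 1) ≠ 0 := by positivity
  have h2 : (2 * (m:ℝ) + 3) ≠ 0 := by positivity
  have h3 : (2 * (m:ℝ) - 1) ≠ 0 := two_nat_sub_one_ne m
  have scf : (2*(m:ℝ)+1)/2/(2*(m:ℝ)+3) - (2*(m:ℝ)+1)/2/(2*(m:ℝ)-1)
        + 4*(2*(m:ℝ)+1) * (1 / ((2*(m:ℝ)-1)*(2*(m:ℝ)+1)*(2*(m:ℝ)+3)))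
      = -2/(2*(m:ℝ)+3) := by
    field_simp
    ring
  linear_combination (2*(m:ℝ)+1) * Real.sin s^2 * (c1 + c2)
    + (2*(2*(m:ℝ)+1)) * (t1 + t2)
    + (4*(2*(m:ℝ)+1)) * hstep
    + (2*(m:ℝ)+1) * prodcos + scf


/-- Antiderivative of `η ↦ (2m+1)·sin s·cos((2m+1)η)·sin η / sin(η−s)`. -/
noncomputable def Fm (m : ℕ) (s η : ℝ) : ℝ :=
  Real.sin s * Real.cos s * Real.sin ((2 * m + 1) * η)
  + (2 * m + 1) * Real.sin s ^ 2 *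
    ( Real.cos ((2 * m + 1) * s) *
        (Real.log (Real.tan ((η - s) / 2)) + (CC (m + 1) (η - s) + CC m (η - s)) / 2)
      - Real.sin ((2 * m + 1) * s) * ((SS (m + 1) (η - s) + SS m (η - s)) / 2) )

lemma hasDerivAt_Fm (m : ℕ) (s η : ℝ) (h1 : Real.sin (η - s) ≠ 0)
    (h2 : Real.cos ((η - s) / 2) ≠ 0) :
    HasDerivAt (Fm m s)
      ((2 * m + 1) * Real.sin s * Real.cos ((2 * m + 1) * η) * Real.sin η / Real.sin (η - s)) η := by
  have hsin2 : Real.sin (η - s) = 2 * Real.sin ((η - s) / 2) * Real.cos ((η - s) / 2) := by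
    rw [show η - s = 2 * ((η - s) / 2) by ring, Real.sin_two_mul]
    ring_nf
  have hhalf : Real.sin ((η - s) / 2) ≠ 0 := by
    intro h; apply h1; rw [hsin2, h]; ring
  have htan : Real.tan ((η - s) / 2) ≠ 0 := by
    rw [Real.tan_eq_sin_div_cos]; exact div_ne_zero hhalf h2
  have hinner : HasDerivAt (fun η : ℝ => (η - s) / 2) (1 / 2) η := by
    simpa using ((hasDerivAt_id η).sub_const s).div_const 2
  have hinner1 : HasDerivAt (fun η : ℝ => η - s) 1 η := by
    simpa using (hasDerivAt_id η).sub_const s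
  -- log ∘ tan part
  have dtan := (Real.hasDerivAt_tan h2).comp η hinner
  have dlog := (Real.hasDerivAt_log htan).comp η dtan
  have dlog' : HasDerivAt (fun η : ℝ => Real.log (Real.tan ((η - s) / 2)))
      (1 / Real.sin (η - s)) η := by
    refine dlog.congr_deriv (Eq.symm ?_)
    rw [Real.tan_eq_sin_div_cos, hsin2]
    field_simp
  -- CC and SS parts
  have dC1 := (hasDerivAt_CC (m + 1) (η - s)).comp η hinner1
  have dC2 := (hasDerivAt_CC m (η - s)).comp η hinner1
  have dS1 := (hasDerivAt_SS (m + 1) (η - s)).comp η hinner1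
  have dS2 := (hasDerivAt_SS m (η - s)).comp η hinner1
  have dsin : HasDerivAt (fun η : ℝ => Real.sin ((2 * m + 1) * η))
      ((2 * m + 1) * Real.cos ((2 * m + 1) * η)) η := by
    have hi : HasDerivAt (fun η : ℝ => (2 * (m:ℝ) + 1) * η) (2 * m + 1) η := by
      simpa using (hasDerivAt_id η).const_mul (2 * (m:ℝ) + 1)
    have := (Real.hasDerivAt_sin ((2 * m + 1) * η)).comp η hi
    refine this.congr_deriv (Eq.symm ?_); ring
  -- assemble
  have big :
      HasDerivAt (Fm m s)
        (Real.sin s * Real.cos s * ((2 * m + 1) * Real.cos ((2 * m + 1) * η))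
          + (2 * m + 1) * Real.sin s ^ 2 *
            ( Real.cos ((2 * m + 1) * s) *
                (1 / Real.sin (η - s)
                  + (-(2 * ∑ j ∈ Finset.range (m+1), Real.sin ((2 * j + 1) * (η - s))) * 1
                     + -(2 * ∑ j ∈ Finset.range m, Real.sin ((2 * j + 1) * (η - s))) * 1) / 2)
              - Real.sin ((2 * m + 1) * s) *
                (((2 * ∑ j ∈ Finset.range (m+1), Real.cos ((2 * j + 1) * (η - s))) * 1
                  + (2 * ∑ j ∈ Finset.range m, Real.cos ((2 * j + 1) * (η - s))) * 1) / 2) )) η := by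
    exact (dsin.const_mul (Real.sin s * Real.cos s)).add
      ((((dlog'.add ((dC1.add dC2).div_const 2)).const_mul (Real.cos ((2 * m + 1) * s))).sub
        (((dS1.add dS2).div_const 2).const_mul (Real.sin ((2 * m + 1) * s)))).const_mul
        ((2 * m + 1 : ℝ) * Real.sin s ^ 2))
  refine big.congr_deriv (Eq.symm ?_)
  -- now prove the value identity
  have e1 : 2 * ∑ j ∈ Finset.range (m+1), Real.cos ((2 * j + 1) * (η - s))
      = Real.sin (2 * ((m:ℝ)+1) * (η - s)) / Real.sin (η - s) := by
    rw [show ((2:ℝ) * ((m:ℝ)+1) * (η - s)) = 2 * ((m+1 : ℕ):ℝ) * (η - s) by push_cast; ring,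
      sin_two_nat_mul]
    rw [mul_div_cancel_left₀ _ h1]
  have e2 : 2 * ∑ j ∈ Finset.range m, Real.cos ((2 * j + 1) * (η - s))
      = Real.sin (2 * (m:ℝ) * (η - s)) / Real.sin (η - s) := by
    rw [sin_two_nat_mul, mul_div_cancel_left₀ _ h1]
  have e3 : 2 * ∑ j ∈ Finset.range (m+1), Real.sin ((2 * j + 1) * (η - s))
      = (1 - Real.cos (2 * ((m:ℝ)+1) * (η - s))) / Real.sin (η - s) := by
    rw [show ((2:ℝ) * ((m:ℝ)+1) * (η - s)) = 2 * ((m+1 : ℕ):ℝ) * (η - s) by push_cast; ring,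
      cos_two_nat_mul]
    rw [sub_sub_cancel, mul_div_cancel_left₀ _ h1]
  have e4 : 2 * ∑ j ∈ Finset.range m, Real.sin ((2 * j + 1) * (η - s))
      = (1 - Real.cos (2 * (m:ℝ) * (η - s))) / Real.sin (η - s) := by
    rw [cos_two_nat_mul, sub_sub_cancel, mul_div_cancel_left₀ _ h1]
  have b1 : Real.sin (2 * ((m:ℝ)+1) * (η - s))
      = Real.sin ((2 * m + 1) * (η - s)) * Real.cos (η - s)
        + Real.cos ((2 * m + 1) * (η - s)) * Real.sin (η - s) := by
    rw [show (2 * ((m:ℝ)+1) * (η - s)) = (2 * m + 1) * (η - s) + (η - s) by ring, Real.sin_add]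
  have b2 : Real.cos (2 * ((m:ℝ)+1) * (η - s))
      = Real.cos ((2 * m + 1) * (η - s)) * Real.cos (η - s)
        - Real.sin ((2 * m + 1) * (η - s)) * Real.sin (η - s) := by
    rw [show (2 * ((m:ℝ)+1) * (η - s)) = (2 * m + 1) * (η - s) + (η - s) by ring, Real.cos_add]
  have b3 : Real.sin (2 * (m:ℝ) * (η - s))
      = Real.sin ((2 * m + 1) * (η - s)) * Real.cos (η - s)
        - Real.cos ((2 * m + 1) * (η - s)) * Real.sin (η - s) := by
    rw [show (2 * (m:ℝ) * (η - s)) = (2 * m + 1) * (η - s) - (η - s) by ring, Real.sin_sub]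
  have b4 : Real.cos (2 * (m:ℝ) * (η - s))
      = Real.cos ((2 * m + 1) * (η - s)) * Real.cos (η - s)
        + Real.sin ((2 * m + 1) * (η - s)) * Real.sin (η - s) := by
    rw [show (2 * (m:ℝ) * (η - s)) = (2 * m + 1) * (η - s) - (η - s) by ring, Real.cos_sub]
  have b5 : Real.cos ((2 * (m:ℝ) + 1) * η)
      = Real.cos ((2 * m + 1) * (η - s)) * Real.cos ((2 * m + 1) * s)
        - Real.sin ((2 * m + 1) * (η - s)) * Real.sin ((2 * m + 1) * s) := by
    rw [show ((2 * (m:ℝ) + 1) * η) = (2 * m + 1) * (η - s) + (2 * m + 1) * s by ring, Real.cos_add]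
  have b6 : Real.sin η
      = Real.sin (η - s) * Real.cos s + Real.cos (η - s) * Real.sin s := by
    rw [show η = (η - s) + s by ring, Real.sin_add]
    ring_nf
  rw [e1, e2, e3, e4, b1, b2, b3, b4, b5, b6]
  field_simp
  ring

/-! y-side facts -/

lemma eta_mem (y : ℝ) : Real.pi / 2 - Real.arctan y ∈ Set.Ioo 0 Real.pi := by
  have h1 := Real.arctan_lt_pi_div_two y
  have h2 := Real.neg_pi_div_two_lt_arctan y
  constructor <;> [linarith; linarith]

lemma sin_eta_pos (y : ℝ) : 0 < Real.sin (Real.pi / 2 - Real.arctan y) :=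
  Real.sin_pos_of_pos_of_lt_pi (eta_mem y).1 (eta_mem y).2

lemma sin_eta_sq (y : ℝ) : Real.sin (Real.pi / 2 - Real.arctan y) ^ 2 = 1 / (1 + y ^ 2) := by
  rw [Real.sin_pi_div_two_sub, Real.cos_arctan]
  rw [div_pow, one_pow]
  congr 1
  rw [Real.sq_sqrt]
  positivity

lemma cos_eta (y : ℝ) : Real.cos (Real.pi / 2 - Real.arctan y)
    = y * Real.sin (Real.pi / 2 - Real.arctan y) := by
  rw [Real.cos_pi_div_two_sub, Real.sin_pi_div_two_sub, Real.sin_arctan, Real.cos_arctan]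
  ring

lemma arctan_cot (s : ℝ) (hs0 : 0 < s) (hsπ : s < Real.pi) :
    Real.arctan (Real.cot s) = Real.pi / 2 - s := by
  have h : Real.cot s = Real.tan (Real.pi / 2 - s) := by
    rw [Real.tan_pi_div_two_sub, Real.cot_eq_cos_div_sin, Real.tan_eq_sin_div_cos, inv_div]
  rw [h, Real.arctan_tan] <;> linarith

lemma sin_eta_sub (s : ℝ) (hs0 : 0 < s) (hsπ : s < Real.pi) (y : ℝ) :
    Real.sin ((Real.pi / 2 - Real.arctan y) - s)
      = (Real.cot s - y) * (Real.sin s * Real.sin (Real.pi / 2 - Real.arctan y)) := by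
  have hss : Real.sin s ≠ 0 := (Real.sin_pos_of_pos_of_lt_pi hs0 hsπ).ne'
  rw [Real.sin_sub, cos_eta, Real.cot_eq_cos_div_sin]
  field_simp

lemma hasDerivAt_u (k : ℕ) (y : ℝ) :
    HasDerivAt (fun y : ℝ => Real.sin (k * (Real.pi / 2 - Real.arctan y)))
      (-(k * Real.cos (k * (Real.pi / 2 - Real.arctan y)) / (1 + y ^ 2))) y := by
  have hi : HasDerivAt (fun y : ℝ => (k : ℝ) * (Real.pi / 2 - Real.arctan y))
      (-(k / (1 + y ^ 2))) y := by
    have h1 : HasDerivAt (fun y : ℝ => Real.pi / 2 - Real.arctan y) (-(1 / (1 + y ^ 2))) y :=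
      (Real.hasDerivAt_arctan y).const_sub (Real.pi / 2)
    have := h1.const_mul (k : ℝ)
    refine this.congr_deriv (Eq.symm ?_); ring
  have := (Real.hasDerivAt_sin ((k : ℝ) * (Real.pi / 2 - Real.arctan y))).comp y hi
  refine this.congr_deriv (Eq.symm ?_); ring

lemma u'_apply (k : ℕ) (y : ℝ) :
    deriv (fun y : ℝ => Real.sin (k * (Real.pi / 2 - Real.arctan y))) y
      = -(k * Real.cos (k * (Real.pi / 2 - Real.arctan y)) / (1 + y ^ 2)) :=
  (hasDerivAt_u k y).deriv

lemma hasDerivAt_Phi (m : ℕ) (s : ℝ) (hs0 : 0 < s) (hsπ : s < Real.pi) (y : ℝ)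
    (hy : y ≠ Real.cot s) :
    HasDerivAt (fun y : ℝ => Fm m s (Real.pi / 2 - Real.arctan y))
      ((-(((2 * m + 1 : ℕ) : ℝ) * Real.cos ((2 * m + 1 : ℕ) * (Real.pi / 2 - Real.arctan y))
          / (1 + y ^ 2))) / (Real.cot s - y)) y := by
  set η := Real.pi / 2 - Real.arctan y with hη
  have hxy : Real.cot s - y ≠ 0 := sub_ne_zero.mpr (Ne.symm hy)
  have hss : (0:ℝ) < Real.sin s := Real.sin_pos_of_pos_of_lt_pi hs0 hsπ
  have hsη : 0 < Real.sin η := sin_eta_pos y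
  have h1 : Real.sin (η - s) ≠ 0 := by
    rw [hη, sin_eta_sub s hs0 hsπ y]
    exact mul_ne_zero hxy (mul_ne_zero hss.ne' hsη.ne')
  have hmem := eta_mem y
  have h2 : Real.cos ((η - s) / 2) ≠ 0 := by
    have : -(Real.pi/2) < (η - s)/2 ∧ (η - s)/2 < Real.pi/2 := by
      constructor <;> [nlinarith [hmem.1, hmem.2]; nlinarith [hmem.1, hmem.2]]
    exact (Real.cos_pos_of_mem_Ioo ⟨this.1, this.2⟩).ne'
  have hinner : HasDerivAt (fun y : ℝ => Real.pi / 2 - Real.arctan y) (-(1 / (1 + y ^ 2))) y :=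
    (Real.hasDerivAt_arctan y).const_sub (Real.pi / 2)
  have hcomp := (hasDerivAt_Fm m s η h1 h2).comp y hinner
  refine hcomp.congr_deriv (Eq.symm ?_)
  have h1y : (1:ℝ) + y ^ 2 ≠ 0 := by positivity
  have hc : ((2 * m + 1 : ℕ) : ℝ) = 2 * (m:ℝ) + 1 := by push_cast; ring
  rw [hc, hη, sin_eta_sub s hs0 hsπ y]
  rw [div_mul_eq_mul_div, div_eq_div_iff hxy (mul_ne_zero hxy (mul_ne_zero hss.ne' hsη.ne'))]
  ring

/-! values at the endpoints -/

lemma CC_neg (M : ℕ) (s : ℝ) : CC M (-s) = CC M s := by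
  unfold CC
  congr 1
  refine Finset.sum_congr rfl fun j _ => ?_
  rw [mul_neg, Real.cos_neg]

lemma SS_neg (M : ℕ) (s : ℝ) : SS M (-s) = -SS M s := by
  unfold SS
  rw [neg_mul_eq_mul_neg, ← Finset.sum_neg_distrib]
  congr 1
  refine Finset.sum_congr rfl fun j _ => ?_
  rw [mul_neg, Real.sin_neg, neg_div]

lemma CC_pi_sub (M : ℕ) (s : ℝ) : CC M (Real.pi - s) = -CC M s := by
  unfold CC
  rw [neg_mul_eq_mul_neg, ← Finset.sum_neg_distrib]
  congr 1
  refine Finset.sum_congr rfl fun j _ => ?_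
  have : ((2*(j:ℝ)+1)) * (Real.pi - s) = (Real.pi - (2*(j:ℝ)+1) * s) + (j : ℤ) * (2 * Real.pi) := by
    push_cast; ring
  rw [this, Real.cos_add_int_mul_two_pi, Real.cos_pi_sub, neg_div]

lemma SS_pi_sub (M : ℕ) (s : ℝ) : SS M (Real.pi - s) = SS M s := by
  unfold SS
  congr 1
  refine Finset.sum_congr rfl fun j _ => ?_
  have : ((2*(j:ℝ)+1)) * (Real.pi - s) = (Real.pi - (2*(j:ℝ)+1) * s) + (j : ℤ) * (2 * Real.pi) := by
    push_cast; ring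
  rw [this, Real.sin_add_int_mul_two_pi, Real.sin_pi_sub]

lemma Fm_zero (m : ℕ) (s : ℝ) : Fm m s 0
    = (2 * m + 1) * Real.sin s ^ 2 *
      ( Real.cos ((2 * m + 1) * s) *
          (Real.log (Real.tan (s / 2)) + (CC (m + 1) s + CC m s) / 2)
        + Real.sin ((2 * m + 1) * s) * ((SS (m + 1) s + SS m s) / 2) ) := by
  unfold Fm
  rw [show (0:ℝ) - s = -s by ring, show (-s)/2 = -(s/2) by ring, Real.tan_neg,
    Real.log_neg_eq_log, CC_neg, CC_neg, SS_neg, SS_neg, mul_zero, Real.sin_zero]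
  ring

lemma Fm_pi (m : ℕ) (s : ℝ) : Fm m s Real.pi
    = (2 * m + 1) * Real.sin s ^ 2 *
      ( Real.cos ((2 * m + 1) * s) *
          (-Real.log (Real.tan (s / 2)) - (CC (m + 1) s + CC m s) / 2)
        - Real.sin ((2 * m + 1) * s) * ((SS (m + 1) s + SS m s) / 2) ) := by
  unfold Fm
  have hsin : Real.sin ((2 * (m:ℝ) + 1) * Real.pi) = 0 := by
    rw [show (2 * (m:ℝ) + 1) * Real.pi = ((2 * m + 1 : ℕ) : ℝ) * Real.pi by push_cast; ring]
    exact Real.sin_nat_mul_pi (2 * m + 1)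
  have htan : Real.tan ((Real.pi - s) / 2) = (Real.tan (s/2))⁻¹ := by
    rw [show (Real.pi - s)/2 = Real.pi/2 - s/2 by ring, Real.tan_pi_div_two_sub]
  rw [hsin, htan, Real.log_inv, CC_pi_sub, CC_pi_sub, SS_pi_sub, SS_pi_sub]
  ring

/-- slope limit for arctan difference quotients from the left -/
lemma tendsto_slope_left (x : ℝ) :
    Tendsto (fun ε => (Real.arctan x - Real.arctan (x - ε)) / ε) (nhdsWithin 0 (Set.Ioi 0))
      (nhds (1 / (1 + x ^ 2))) := by
  have hs := hasDerivAt_iff_tendsto_slope.mp (Real.hasDerivAt_arctan x)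
  have hmap : Tendsto (fun ε : ℝ => x - ε) (nhdsWithin 0 (Set.Ioi 0)) (nhdsWithin x {x}ᶜ) := by
    apply tendsto_nhdsWithin_of_tendsto_nhds_of_eventually_within
    · have : Tendsto (fun ε : ℝ => x - ε) (nhds 0) (nhds (x - 0)) :=
        (continuous_const.sub continuous_id).tendsto 0
      simpa using this.mono_left nhdsWithin_le_nhds
    · filter_upwards [self_mem_nhdsWithin] with ε hε
      simp only [Set.mem_compl_iff, Set.mem_singleton_iff]
      intro h
      have : ε = 0 := by linarith [sub_eq_self.mp h]
      exact absurd this (ne_of_gt hε)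
  have := hs.comp hmap
  apply this.congr
  intro ε
  simp only [Function.comp_apply, slope_def_field]
  rw [show x - ε - x = -ε by ring]
  rw [div_neg, ← neg_div, neg_sub]

lemma tendsto_slope_right (x : ℝ) :
    Tendsto (fun ε => (Real.arctan (x + ε) - Real.arctan x) / ε) (nhdsWithin 0 (Set.Ioi 0))
      (nhds (1 / (1 + x ^ 2))) := by
  have hs := hasDerivAt_iff_tendsto_slope.mp (Real.hasDerivAt_arctan x)
  have hmap : Tendsto (fun ε : ℝ => x + ε) (nhdsWithin 0 (Set.Ioi 0)) (nhdsWithin x {x}ᶜ) := by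
    apply tendsto_nhdsWithin_of_tendsto_nhds_of_eventually_within
    · have : Tendsto (fun ε : ℝ => x + ε) (nhds 0) (nhds (x + 0)) :=
        (continuous_const.add continuous_id).tendsto 0
      simpa using this.mono_left nhdsWithin_le_nhds
    · filter_upwards [self_mem_nhdsWithin] with ε hε
      simp only [Set.mem_compl_iff, Set.mem_singleton_iff]
      intro h
      have : ε = 0 := by linarith [add_eq_left.mp h]
      exact absurd this (ne_of_gt hε)
  have := hs.comp hmap
  apply this.congr
  intro ε
  simp only [Function.comp_apply, slope_def_field]
  rw [show x + ε - x = ε by ring]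

lemma tendsto_tan_div (x : ℝ) (a : ℝ → ℝ)
    (ha0 : Tendsto a (nhdsWithin 0 (Set.Ioi 0)) (nhds 0))
    (hapos : ∀ ε ∈ Set.Ioi (0:ℝ), 0 < a ε) :
    Tendsto (fun ε => Real.tan (a ε / 2) / (a ε / 2)) (nhdsWithin 0 (Set.Ioi 0)) (nhds 1) := by
  have h0 : Real.cos 0 ≠ 0 := by norm_num
  have hd := Real.hasDerivAt_tan h0
  simp only [Real.cos_zero] at hd
  norm_num at hd
  have hs := hasDerivAt_iff_tendsto_slope.mp hd
  have hmap : Tendsto (fun ε => a ε / 2) (nhdsWithin 0 (Set.Ioi 0)) (nhdsWithin 0 {0}ᶜ) := by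
    apply tendsto_nhdsWithin_of_tendsto_nhds_of_eventually_within
    · simpa using ha0.div_const 2
    · filter_upwards [self_mem_nhdsWithin] with ε hε
      simp only [Set.mem_compl_iff, Set.mem_singleton_iff]
      have := hapos ε hε
      positivity
  have := hs.comp hmap
  apply this.congr
  intro ε
  simp [slope_def_field, Real.tan_zero]

/-- the ratio of the two tangents tends to 1 -/
lemma tendsto_tan_ratio (x : ℝ) :
    Tendsto (fun ε => Real.tan ((Real.arctan x - Real.arctan (x - ε)) / 2)
        / Real.tan ((Real.arctan (x + ε) - Real.arctan x) / 2))
      (nhdsWithin 0 (Set.Ioi 0)) (nhds 1) := by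
  set a : ℝ → ℝ := fun ε => Real.arctan x - Real.arctan (x - ε) with hadef
  set b : ℝ → ℝ := fun ε => Real.arctan (x + ε) - Real.arctan x with hbdef
  have hapos : ∀ ε ∈ Set.Ioi (0:ℝ), 0 < a ε := fun ε hε =>
    sub_pos.mpr (Real.arctan_strictMono (by linarith [Set.mem_Ioi.mp hε]))
  have hbpos : ∀ ε ∈ Set.Ioi (0:ℝ), 0 < b ε := fun ε hε =>
    sub_pos.mpr (Real.arctan_strictMono (by linarith [Set.mem_Ioi.mp hε]))
  have haup : ∀ ε : ℝ, a ε < Real.pi := fun ε => by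
    have h1 := Real.arctan_lt_pi_div_two x
    have h2 := Real.neg_pi_div_two_lt_arctan (x - ε)
    rw [hadef]
    simp only
    nlinarith [Real.pi_pos]
  have hbup : ∀ ε : ℝ, b ε < Real.pi := fun ε => by
    have h1 := Real.arctan_lt_pi_div_two (x + ε)
    have h2 := Real.neg_pi_div_two_lt_arctan x
    rw [hbdef]
    simp only
    nlinarith [Real.pi_pos]
  have ha0 : Tendsto a (nhdsWithin 0 (Set.Ioi 0)) (nhds 0) := by
    have : Tendsto (fun ε : ℝ => Real.arctan x - Real.arctan (x - ε)) (nhds 0)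
        (nhds (Real.arctan x - Real.arctan (x - 0))) :=
      (continuous_const.sub (Real.continuous_arctan.comp (continuous_const.sub continuous_id))).tendsto 0
    have h2 := this.mono_left (nhdsWithin_le_nhds (s := Set.Ioi 0))
    simpa using h2
  have hb0 : Tendsto b (nhdsWithin 0 (Set.Ioi 0)) (nhds 0) := by
    have : Tendsto (fun ε : ℝ => Real.arctan (x + ε) - Real.arctan x) (nhds 0)
        (nhds (Real.arctan (x + 0) - Real.arctan x)) :=
      ((Real.continuous_arctan.comp (continuous_const.add continuous_id)).sub continuous_const).tendsto 0
    have h2 := this.mono_left (nhdsWithin_le_nhds (s := Set.Ioi 0))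
    simpa using h2
  have t1 := tendsto_tan_div x a ha0 hapos
  have t2 := tendsto_tan_div x b hb0 hbpos
  have t2' : Tendsto (fun ε => (b ε / 2) / Real.tan (b ε / 2)) (nhdsWithin 0 (Set.Ioi 0))
      (nhds 1) := by
    have := t2.inv₀ one_ne_zero
    simp only [inv_one] at this
    apply this.congr
    intro ε
    rw [inv_div]
  have hA := tendsto_slope_left x
  have hB := tendsto_slope_right x
  have hd : (1:ℝ) / (1 + x ^ 2) ≠ 0 := by positivity
  have hab : Tendsto (fun ε => a ε / b ε) (nhdsWithin 0 (Set.Ioi 0)) (nhds 1) := by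
    have := hA.div hB hd
    rw [div_self hd] at this
    apply this.congr'
    filter_upwards [self_mem_nhdsWithin] with ε hε
    have hε0 : (ε:ℝ) ≠ 0 := ne_of_gt (Set.mem_Ioi.mp hε)
    have hbne : b ε ≠ 0 := (hbpos ε hε).ne'
    show (a ε / ε) / (b ε / ε) = a ε / b ε; field_simp
  have prod := (t1.mul t2').mul hab
  norm_num at prod
  apply prod.congr'
  filter_upwards [self_mem_nhdsWithin] with ε hε
  have hane : a ε ≠ 0 := (hapos ε hε).ne'
  have hbne : b ε ≠ 0 := (hbpos ε hε).ne'
  have htb : Real.tan (b ε / 2) ≠ 0 :=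
    (Real.tan_pos_of_pos_of_lt_pi_div_two (half_pos (hbpos ε hε)) ((div_lt_div_iff_of_pos_right (by norm_num : (0:ℝ) < 2)).mpr (hbup ε))).ne'
  have hrfl : Real.tan ((Real.arctan x - Real.arctan (x - ε)) / 2)
      / Real.tan ((Real.arctan (x + ε) - Real.arctan x) / 2)
      = Real.tan (a ε / 2) / Real.tan (b ε / 2) := rfl
  rw [hrfl]
  field_simp


/-- the continuous (log-free) part -/
noncomputable def Gm (m : ℕ) (s η : ℝ) : ℝ :=
  Real.sin s * Real.cos s * Real.sin ((2 * m + 1) * η)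
  + (2 * m + 1) * Real.sin s ^ 2 *
    ( Real.cos ((2 * m + 1) * s) * ((CC (m + 1) (η - s) + CC m (η - s)) / 2)
      - Real.sin ((2 * m + 1) * s) * ((SS (m + 1) (η - s) + SS m (η - s)) / 2) )

lemma Fm_eq_Gm (m : ℕ) (s η : ℝ) :
    Fm m s η = Gm m s η + (2 * m + 1) * Real.sin s ^ 2 * Real.cos ((2 * m + 1) * s)
      * Real.log (Real.tan ((η - s) / 2)) := by
  unfold Fm Gm; ring

lemma continuous_CC (M : ℕ) : Continuous (CC M) := by
  unfold CC
  exact continuous_const.mul (continuous_finset_sum _ fun j _ =>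
    (Real.continuous_cos.comp (continuous_const.mul continuous_id)).div_const _)

lemma continuous_SS (M : ℕ) : Continuous (SS M) := by
  unfold SS
  exact continuous_const.mul (continuous_finset_sum _ fun j _ =>
    (Real.continuous_sin.comp (continuous_const.mul continuous_id)).div_const _)

lemma continuous_Gm (m : ℕ) (s : ℝ) : Continuous (Gm m s) := by
  unfold Gm
  refine Continuous.add ?_ (continuous_const.mul (Continuous.sub ?_ ?_))
  · exact continuous_const.mul (Real.continuous_sin.comp (continuous_const.mul continuous_id))
  · exact continuous_const.mul ((((continuous_CC (m+1)).comp (continuous_id.sub continuous_const)).add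
      ((continuous_CC m).comp (continuous_id.sub continuous_const))).div_const 2)
  · exact continuous_const.mul ((((continuous_SS (m+1)).comp (continuous_id.sub continuous_const)).add
      ((continuous_SS m).comp (continuous_id.sub continuous_const))).div_const 2)

lemma continuousAt_Fm (m : ℕ) (s η₀ : ℝ) (h2 : Real.cos ((η₀ - s) / 2) ≠ 0)
    (h3 : Real.sin ((η₀ - s) / 2) ≠ 0) : ContinuousAt (Fm m s) η₀ := by
  have htan0 : Real.tan ((η₀ - s) / 2) ≠ 0 := by
    rw [Real.tan_eq_sin_div_cos]; exact div_ne_zero h3 h2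
  have cinner : ContinuousAt (fun η : ℝ => (η - s) / 2) η₀ :=
    ((continuous_id.sub continuous_const).div_const 2).continuousAt
  have ctan : ContinuousAt (fun η : ℝ => Real.tan ((η - s) / 2)) η₀ :=
    ContinuousAt.comp (g := Real.tan) (f := fun η : ℝ => (η - s) / 2) (x := η₀)
      (Real.continuousAt_tan.mpr h2) cinner
  have clog : ContinuousAt (fun η : ℝ => Real.log (Real.tan ((η - s) / 2))) η₀ :=
    ContinuousAt.comp (g := Real.log) (f := fun η : ℝ => Real.tan ((η - s) / 2)) (x := η₀)
      (Real.continuousAt_log htan0) ctan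
  have : ContinuousAt (fun η => Gm m s η + (2 * m + 1) * Real.sin s ^ 2
      * Real.cos ((2 * m + 1) * s) * Real.log (Real.tan ((η - s) / 2))) η₀ :=
    ((continuous_Gm m s).continuousAt).add (clog.const_mul _)
  exact this.congr (by filter_upwards with η using (Fm_eq_Gm m s η).symm) |>.congr
    (by filter_upwards with η using rfl)

lemma tendsto_Phi_atTop (m : ℕ) (s : ℝ) (hs0 : 0 < s) (hsπ : s < Real.pi) :
    Tendsto (fun y : ℝ => Fm m s (Real.pi / 2 - Real.arctan y)) atTop (nhds (Fm m s 0)) := by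
  have hcos : Real.cos ((0 - s) / 2) ≠ 0 := by
    rw [show ((0:ℝ) - s)/2 = -(s/2) by ring, Real.cos_neg]
    exact (Real.cos_pos_of_mem_Ioo ⟨by linarith, by linarith⟩).ne'
  have hsin : Real.sin ((0 - s) / 2) ≠ 0 := by
    rw [show ((0:ℝ) - s)/2 = -(s/2) by ring, Real.sin_neg]
    exact neg_ne_zero.mpr (Real.sin_pos_of_pos_of_lt_pi (by linarith) (by linarith [Real.pi_pos])).ne'
  have hF := (continuousAt_Fm m s 0 hcos hsin).tendsto
  have hinner : Tendsto (fun y : ℝ => Real.pi / 2 - Real.arctan y) atTop (nhds 0) := by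
    have := Real.tendsto_arctan_atTop.mono_right nhdsWithin_le_nhds
    have h2 := (tendsto_const_nhds (x := Real.pi/2)).sub this
    simpa using h2
  exact hF.comp hinner

lemma tendsto_Phi_atBot (m : ℕ) (s : ℝ) (hs0 : 0 < s) (hsπ : s < Real.pi) :
    Tendsto (fun y : ℝ => Fm m s (Real.pi / 2 - Real.arctan y)) atBot
      (nhds (Fm m s Real.pi)) := by
  have hcos : Real.cos ((Real.pi - s) / 2) ≠ 0 :=
    (Real.cos_pos_of_mem_Ioo ⟨by linarith, by linarith⟩).ne'
  have hsin : Real.sin ((Real.pi - s) / 2) ≠ 0 :=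
    (Real.sin_pos_of_pos_of_lt_pi (by linarith) (by linarith [Real.pi_pos])).ne'
  have hF := (continuousAt_Fm m s Real.pi hcos hsin).tendsto
  have hinner : Tendsto (fun y : ℝ => Real.pi / 2 - Real.arctan y) atBot (nhds Real.pi) := by
    have := Real.tendsto_arctan_atBot.mono_right nhdsWithin_le_nhds
    have h2 := (tendsto_const_nhds (x := Real.pi/2)).sub this
    have : Real.pi / 2 - -(Real.pi/2) = Real.pi := by ring
    simpa [this] using h2
  exact hF.comp hinner

lemma integrableOn_f' (m : ℕ) (x ε : ℝ) (hε : 0 < ε) (S : Set ℝ) (hS : MeasurableSet S)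
    (hSsub : ∀ y ∈ S, ε ≤ |x - y|) :
    IntegrableOn (fun y : ℝ =>
      (-(((2*m+1 : ℕ) : ℝ) * Real.cos ((2*m+1 : ℕ) * (Real.pi/2 - Real.arctan y)) / (1 + y^2)))
        / (x - y)) S := by
  have hg : Integrable (fun y : ℝ => ((2*m+1 : ℕ) : ℝ)/ε * (1 + y^2)⁻¹) :=
    integrable_inv_one_add_sq.const_mul _
  refine Integrable.mono' (hg.restrict (s := S)) ?_ ?_
  · apply ContinuousOn.aestronglyMeasurable ?_ hS
    apply ContinuousOn.div
    · refine Continuous.continuousOn ?_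
      apply Continuous.neg
      apply Continuous.div ?_ (by fun_prop) (fun y => by positivity)
      exact continuous_const.mul
        (Real.continuous_cos.comp (continuous_const.mul
          (continuous_const.sub Real.continuous_arctan)))
    · exact (Continuous.continuousOn (by fun_prop))
    · intro y hy
      have := hSsub y hy
      intro h
      rw [h] at this
      simp at this
      linarith
  · rw [ae_restrict_iff' hS]
    refine Eventually.of_forall fun y hy => ?_
    have hd := hSsub y hy
    have h0 : (0:ℝ) < 1 + y^2 := by positivity
    have habs : 0 < |x - y| := lt_of_lt_of_le hε hd
    rw [norm_div, Real.norm_eq_abs, Real.norm_eq_abs]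
    calc |(-(((2*m+1 : ℕ) : ℝ) * Real.cos ((2*m+1 : ℕ) * (Real.pi/2 - Real.arctan y)) / (1 + y^2)))|
          / |x - y|
        ≤ (((2*m+1 : ℕ) : ℝ) / (1 + y^2)) / ε := by
          apply div_le_div₀ (by positivity) ?_ hε hd
          rw [abs_neg, abs_div, abs_of_pos h0, abs_mul, Nat.abs_cast]
          have hcle := Real.abs_cos_le_one (((2*m+1 : ℕ) : ℝ) * (Real.pi/2 - Real.arctan y))
          have habsn := abs_nonneg (Real.cos (((2*m+1 : ℕ) : ℝ) * (Real.pi/2 - Real.arctan y)))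
          have hK : (0:ℝ) ≤ ((2*m+1 : ℕ) : ℝ) := Nat.cast_nonneg _
          have : ((2*m+1 : ℕ) : ℝ) * |Real.cos (((2*m+1 : ℕ) : ℝ) * (Real.pi/2 - Real.arctan y))|
              ≤ ((2*m+1 : ℕ) : ℝ) := by nlinarith
          gcongr
      _ = ((2*m+1 : ℕ) : ℝ)/ε * (1 + y^2)⁻¹ := by ring

end PVaux

open PVaux


/-- For `k` an odd positive integer, `s ∈ (0, π)`, `x = cot s` and
`u(y) = sin(k·(π/2 − arctan y))`, the principal value `(1/π)·PV∫ u'(y)/(x−y) dy` exists and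
equals `−2/(π(k+2)) − (2k/π)cos(ks)(cos s + sin² s·ln(cot(s/2)))
 − (8k/π)∑_{n=0}^{(k−1)/2} cos((k−1−2n)s)/((2n−1)(2n+1)(2n+3))`. -/
theorem halfLaplacian_sin_odd (k : ℕ) (hk : Odd k) (hkpos : 0 < k)
    (s : ℝ) (hs : s ∈ Set.Ioo 0 Real.pi) (x : ℝ) (hx : x = Real.cot s) :
    Tendsto (fun ε : ℝ => (1 / Real.pi) *
        ∫ y in {y : ℝ | ε ≤ |x - y|},
          deriv (fun y : ℝ => Real.sin (k * (Real.pi / 2 - Real.arctan y))) y / (x - y))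
      (nhdsWithin 0 (Set.Ioi 0))
      (nhds (
        -2 / (Real.pi * (k + 2))
        - (2 * k / Real.pi) * Real.cos (k * s)
            * (Real.cos s + (Real.sin s) ^ 2 * Real.log (Real.cot (s / 2)))
        - (8 * k / Real.pi) * ∑ n ∈ Finset.range ((k - 1) / 2 + 1),
            Real.cos (((k : ℝ) - 1 - 2 * n) * s)
              / ((2 * (n : ℝ) - 1) * (2 * (n : ℝ) + 1) * (2 * (n : ℝ) + 3)))) := by
  obtain ⟨m, rfl⟩ := hk
  obtain ⟨hs0, hsπ⟩ := hs
  subst hx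
  set x := Real.cot s with hxdef
  have harc : Real.arctan x = Real.pi / 2 - s := arctan_cot s hs0 hsπ
  -- Step A : exact value of the truncated integral
  have hint : ∀ ε ∈ Set.Ioi (0:ℝ),
      (∫ y in {y : ℝ | ε ≤ |x - y|},
          deriv (fun y : ℝ => Real.sin ((2*m+1 : ℕ) * (Real.pi / 2 - Real.arctan y))) y
            / (x - y))
        = (Fm m s (Real.pi/2 - Real.arctan (x - ε)) - Fm m s Real.pi)
          + (Fm m s 0 - Fm m s (Real.pi/2 - Real.arctan (x + ε))) := by
    intro ε hε
    rw [Set.mem_Ioi] at hε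
    have hset : {y : ℝ | ε ≤ |x - y|} = Set.Iic (x - ε) ∪ Set.Ici (x + ε) := by
      ext y
      simp only [Set.mem_setOf_eq, Set.mem_union, Set.mem_Iic, Set.mem_Ici, le_abs]
      constructor
      · rintro (h | h)
        · left; linarith
        · right; linarith
      · rintro (h | h)
        · left; linarith
        · right; linarith
    rw [hset]
    simp only [u'_apply]
    have hint1 : IntegrableOn (fun y : ℝ =>
        (-(((2*m+1 : ℕ) : ℝ) * Real.cos ((2*m+1 : ℕ) * (Real.pi/2 - Real.arctan y)) / (1 + y^2)))
          / (x - y)) (Set.Iic (x - ε)) :=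
      integrableOn_f' m x ε hε _ measurableSet_Iic (fun y hy => by
        have := Set.mem_Iic.mp hy
        rw [abs_of_nonneg (by linarith)]; linarith)
    have hint2 : IntegrableOn (fun y : ℝ =>
        (-(((2*m+1 : ℕ) : ℝ) * Real.cos ((2*m+1 : ℕ) * (Real.pi/2 - Real.arctan y)) / (1 + y^2)))
          / (x - y)) (Set.Ici (x + ε)) :=
      integrableOn_f' m x ε hε _ measurableSet_Ici (fun y hy => by
        have := Set.mem_Ici.mp hy
        rw [abs_of_nonpos (by linarith)]; linarith)
    rw [MeasureTheory.setIntegral_union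
        ((Set.Iic_disjoint_Ici).mpr (by intro h; linarith)) measurableSet_Ici hint1 hint2]
    have hIic : ∫ y in Set.Iic (x - ε), (-(((2*m+1 : ℕ) : ℝ)
          * Real.cos ((2*m+1 : ℕ) * (Real.pi/2 - Real.arctan y)) / (1 + y^2))) / (x - y)
        = Fm m s (Real.pi/2 - Real.arctan (x - ε)) - Fm m s Real.pi :=
      MeasureTheory.integral_Iic_of_hasDerivAt_of_tendsto'
        (fun y hy => hasDerivAt_Phi m s hs0 hsπ y
          (by have := Set.mem_Iic.mp hy; intro h; rw [h] at this; linarith))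
        hint1 (tendsto_Phi_atBot m s hs0 hsπ)
    have hIci : ∫ y in Set.Ici (x + ε), (-(((2*m+1 : ℕ) : ℝ)
          * Real.cos ((2*m+1 : ℕ) * (Real.pi/2 - Real.arctan y)) / (1 + y^2))) / (x - y)
        = Fm m s 0 - Fm m s (Real.pi/2 - Real.arctan (x + ε)) := by
      rw [MeasureTheory.integral_Ici_eq_integral_Ioi]
      exact MeasureTheory.integral_Ioi_of_hasDerivAt_of_tendsto'
        (fun y hy => hasDerivAt_Phi m s hs0 hsπ y
          (by have := Set.mem_Ici.mp hy; intro h; rw [h] at this; linarith))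
        (hint2.mono_set Set.Ioi_subset_Ici_self) (tendsto_Phi_atTop m s hs0 hsπ)
    rw [hIic, hIci]
  -- Step B : the limit of the boundary terms
  have hdiff0 : Tendsto (fun ε : ℝ =>
      Fm m s (Real.pi/2 - Real.arctan (x - ε)) - Fm m s (Real.pi/2 - Real.arctan (x + ε)))
      (nhdsWithin 0 (Set.Ioi 0)) (nhds 0) := by
    have hc1 : Tendsto (fun ε : ℝ => Real.pi/2 - Real.arctan (x - ε))
        (nhdsWithin 0 (Set.Ioi 0)) (nhds s) := by
      have h0 : Tendsto (fun ε : ℝ => Real.pi/2 - Real.arctan (x - ε)) (nhds 0)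
          (nhds (Real.pi/2 - Real.arctan (x - 0))) :=
        (continuous_const.sub (Real.continuous_arctan.comp
          (continuous_const.sub continuous_id))).tendsto 0
      have h1 := h0.mono_left (nhdsWithin_le_nhds (s := Set.Ioi 0))
      simpa [harc] using h1
    have hc2 : Tendsto (fun ε : ℝ => Real.pi/2 - Real.arctan (x + ε))
        (nhdsWithin 0 (Set.Ioi 0)) (nhds s) := by
      have h0 : Tendsto (fun ε : ℝ => Real.pi/2 - Real.arctan (x + ε)) (nhds 0)
          (nhds (Real.pi/2 - Real.arctan (x + 0))) :=
        (continuous_const.sub (Real.continuous_arctan.comp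
          (continuous_const.add continuous_id))).tendsto 0
      have h1 := h0.mono_left (nhdsWithin_le_nhds (s := Set.Ioi 0))
      simpa [harc] using h1
    have hG : Tendsto (fun ε : ℝ =>
        Gm m s (Real.pi/2 - Real.arctan (x - ε)) - Gm m s (Real.pi/2 - Real.arctan (x + ε)))
        (nhdsWithin 0 (Set.Ioi 0)) (nhds 0) := by
      have hGc := (continuous_Gm m s).continuousAt (x := s)
      have := (hGc.tendsto.comp hc1).sub (hGc.tendsto.comp hc2)
      simpa using this
    -- log part
    have hratio := tendsto_tan_ratio x
    have hlog0 : Tendsto (fun ε : ℝ =>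
        Real.log (Real.tan ((Real.arctan x - Real.arctan (x - ε)) / 2)
          / Real.tan ((Real.arctan (x + ε) - Real.arctan x) / 2)))
        (nhdsWithin 0 (Set.Ioi 0)) (nhds 0) := by
      have := (Real.continuousAt_log one_ne_zero).tendsto.comp hratio
      simpa [Real.log_one, Function.comp_def] using this
    have hLD : Tendsto (fun ε : ℝ =>
        Real.log (Real.tan (((Real.pi/2 - Real.arctan (x - ε)) - s) / 2))
          - Real.log (Real.tan (((Real.pi/2 - Real.arctan (x + ε)) - s) / 2)))
        (nhdsWithin 0 (Set.Ioi 0)) (nhds 0) := by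
      apply hlog0.congr'
      filter_upwards [self_mem_nhdsWithin] with ε hε
      rw [Set.mem_Ioi] at hε
      have hapos : 0 < Real.arctan x - Real.arctan (x - ε) :=
        sub_pos.mpr (Real.arctan_strictMono (by linarith))
      have hbpos : 0 < Real.arctan (x + ε) - Real.arctan x :=
        sub_pos.mpr (Real.arctan_strictMono (by linarith))
      have haup : Real.arctan x - Real.arctan (x - ε) < Real.pi := by
        have h1 := Real.arctan_lt_pi_div_two x
        have h2 := Real.neg_pi_div_two_lt_arctan (x - ε)
        nlinarith [Real.pi_pos]
      have hbup : Real.arctan (x + ε) - Real.arctan x < Real.pi := by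
        have h1 := Real.arctan_lt_pi_div_two (x + ε)
        have h2 := Real.neg_pi_div_two_lt_arctan x
        nlinarith [Real.pi_pos]
      have hta : (0:ℝ) < Real.tan ((Real.arctan x - Real.arctan (x - ε)) / 2) :=
        Real.tan_pos_of_pos_of_lt_pi_div_two (by positivity) (by linarith)
      have htb : (0:ℝ) < Real.tan ((Real.arctan (x + ε) - Real.arctan x) / 2) :=
        Real.tan_pos_of_pos_of_lt_pi_div_two (by positivity) (by linarith)
      rw [Real.log_div hta.ne' htb.ne']
      congr 1
      · congr 2
        rw [harc]; ring
      · rw [show ((Real.pi/2 - Real.arctan (x + ε)) - s) / 2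
            = -((Real.arctan (x + ε) - Real.arctan x) / 2) by rw [harc]; ring,
          Real.tan_neg, Real.log_neg_eq_log]
    have hC := hLD.const_mul ((2*(m:ℝ)+1) * Real.sin s ^ 2 * Real.cos ((2*(m:ℝ)+1)*s))
    rw [mul_zero] at hC
    have := hG.add hC
    rw [add_zero] at this
    apply this.congr
    intro ε
    rw [Fm_eq_Gm, Fm_eq_Gm]
    push_cast
    ring
  -- Step C : identification of the limit value
  have hval : (1/Real.pi) * (Fm m s 0 - Fm m s Real.pi)
      = -2 / (Real.pi * ((2*m+1 : ℕ) + 2))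
        - (2 * (2*m+1 : ℕ) / Real.pi) * Real.cos ((2*m+1 : ℕ) * s)
            * (Real.cos s + (Real.sin s) ^ 2 * Real.log (Real.cot (s / 2)))
        - (8 * (2*m+1 : ℕ) / Real.pi) * ∑ n ∈ Finset.range ((2*m+1 - 1) / 2 + 1),
            Real.cos ((((2*m+1 : ℕ) : ℝ) - 1 - 2 * n) * s)
              / ((2 * (n : ℝ) - 1) * (2 * (n : ℝ) + 1) * (2 * (n : ℝ) + 3)) := by
    have hk := key_identity m s
    have ltc : Real.log (Real.tan (s/2)) = -Real.log (Real.cot (s/2)) := by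
      rw [show Real.tan (s/2) = (Real.cot (s/2))⁻¹ by
        rw [Real.cot_eq_cos_div_sin, inv_div, Real.tan_eq_sin_div_cos], Real.log_inv]
    rw [Fm_zero, Fm_pi]
    rw [show (2*m+1 - 1) / 2 + 1 = m + 1 from by omega]
    have hsum : ∑ n ∈ Finset.range (m+1),
        Real.cos ((((2*m+1 : ℕ) : ℝ) - 1 - 2 * n) * s)
          / ((2 * (n : ℝ) - 1) * (2 * (n : ℝ) + 1) * (2 * (n : ℝ) + 3))
        = ∑ n ∈ Finset.range (m+1), Real.cos ((2*(m:ℝ) - 2*n) * s)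
          / ((2 * (n : ℝ) - 1) * (2 * (n : ℝ) + 1) * (2 * (n : ℝ) + 3)) := by
      refine Finset.sum_congr rfl fun n _ => ?_
      rw [show (((2*m+1 : ℕ) : ℝ) - 1 - 2 * n) * s = (2*(m:ℝ) - 2*n) * s by push_cast; ring]
    rw [hsum]
    push_cast
    have hπd : (Real.pi * (2*(m:ℝ)+3))⁻¹ = Real.pi⁻¹ * (2*(m:ℝ)+3)⁻¹ := mul_inv _ _
    linear_combination (1/Real.pi) * hk
      + (2*(2*(m:ℝ)+1)/Real.pi) * Real.sin s ^ 2 * Real.cos ((2*(m:ℝ)+1)*s) * ltc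
      + 2 * hπd
  -- assemble
  have hlim : Tendsto (fun ε : ℝ => (1/Real.pi) *
      ((Fm m s (Real.pi/2 - Real.arctan (x - ε)) - Fm m s Real.pi)
        + (Fm m s 0 - Fm m s (Real.pi/2 - Real.arctan (x + ε)))))
      (nhdsWithin 0 (Set.Ioi 0))
      (nhds ((1/Real.pi) * (Fm m s 0 - Fm m s Real.pi))) := by
    have := (hdiff0.add_const (Fm m s 0 - Fm m s Real.pi)).const_mul (1/Real.pi)
    rw [zero_add] at this
    apply this.congr
    intro ε
    ring
  rw [hval] at hlim
  apply hlim.congr'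
  filter_upwards [self_mem_nhdsWithin] with ε hε
  rw [hint ε hε]
end
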